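/- arXiv:1410.8424 — 9 statements merged into one kernel-verified Lean document; each statement's English description precedes it below -/
import Mathlib

section
/- Every normally regular digraph is normal, i.e., its adjacency matrix A satisfies A·Aᵀ = Aᵀ·A. -/
open Matrix

/-- The v×v all-ones matrix over ℝ. -/
def allOnes (v : ℕ) : Matrix (Fin v) (Fin v) ℝ := Matrix.of fun _ _ => 1

/-- `A` is the adjacency matrix of a normally regular digraph with parameters
    `(v, k, l, m)` (i.e. `(v, k, λ, μ)`): a {0,1}-matrix with zero diagonal
    satisfying A·Aᵀ = k·I + λ·(A + Aᵀ) + μ·(J − I − A − Aᵀ). -/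
def IsNRD (v : ℕ) (k l m : ℤ) (A : Matrix (Fin v) (Fin v) ℝ) : Prop :=
  (∀ i j, A i j = 0 ∨ A i j = 1) ∧ (∀ i, A i i = 0) ∧
    A * Aᵀ = (k : ℝ) • (1 : Matrix (Fin v) (Fin v) ℝ) + (l : ℝ) • (A + Aᵀ) +
      (m : ℝ) • (allOnes v - 1 - A - Aᵀ)

namespace NRDaux

variable {v : ℕ}

lemma trace_mul_vmv (M : Matrix (Fin v) (Fin v) ℝ) (x y : Fin v → ℝ) :
    (M * vecMulVec x y).trace = y ⬝ᵥ (M *ᵥ x) := by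
  simp only [Matrix.trace, Matrix.diag, Matrix.mul_apply, Matrix.vecMulVec_apply,
    Matrix.mulVec, dotProduct, Finset.mul_sum]
  exact Finset.sum_congr rfl fun i _ => Finset.sum_congr rfl fun j _ => by ring

lemma mul_vmv (M : Matrix (Fin v) (Fin v) ℝ) (x y : Fin v → ℝ) :
    M * vecMulVec x y = vecMulVec (M *ᵥ x) y := by
  ext i j
  simp only [Matrix.mul_apply, Matrix.vecMulVec_apply, Matrix.mulVec, dotProduct,
    Finset.sum_mul]
  exact Finset.sum_congr rfl fun t _ => by ring

lemma vmv_mul (x y : Fin v → ℝ) (M : Matrix (Fin v) (Fin v) ℝ) :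
    vecMulVec x y * M = vecMulVec x (Mᵀ *ᵥ y) := by
  ext i j
  simp only [Matrix.mul_apply, Matrix.vecMulVec_apply, Matrix.mulVec, Matrix.transpose_apply,
    dotProduct, Finset.mul_sum]
  exact Finset.sum_congr rfl fun t _ => by ring

lemma vmv_mulVec (x y z : Fin v → ℝ) :
    vecMulVec x y *ᵥ z = (y ⬝ᵥ z) • x := by
  funext i
  simp only [Matrix.mulVec, Matrix.vecMulVec_apply, dotProduct, Pi.smul_apply,
    smul_eq_mul, Finset.sum_mul]
  exact Finset.sum_congr rfl fun t _ => by ring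

lemma trace_vmv (x y : Fin v → ℝ) : (vecMulVec x y).trace = x ⬝ᵥ y := by
  simp [Matrix.trace, Matrix.diag, Matrix.vecMulVec_apply, dotProduct]

lemma vmv_transpose (x y : Fin v → ℝ) : (vecMulVec x y)ᵀ = vecMulVec y x := by
  ext i j; simp [Matrix.vecMulVec_apply, mul_comm]

lemma vmv_smul_left (a : ℝ) (x y : Fin v → ℝ) :
    vecMulVec (a • x) y = a • vecMulVec x y := by
  ext i j; simp [Matrix.vecMulVec_apply]; ring

lemma trace_mul_transpose_eq (M : Matrix (Fin v) (Fin v) ℝ) :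
    (M * Mᵀ).trace = ∑ i, ∑ j, M i j * M i j := by
  simp [Matrix.trace, Matrix.diag, Matrix.mul_apply]

lemma trace_mul_transpose_nonneg (M : Matrix (Fin v) (Fin v) ℝ) :
    0 ≤ (M * Mᵀ).trace := by
  rw [trace_mul_transpose_eq]
  exact Finset.sum_nonneg fun i _ => Finset.sum_nonneg fun j _ => mul_self_nonneg _

lemma eq_zero_of_trace_nonpos (M : Matrix (Fin v) (Fin v) ℝ)
    (h : (M * Mᵀ).trace ≤ 0) : M = 0 := by
  have hnn : ∀ i ∈ Finset.univ, 0 ≤ ∑ j, M i j * M i j :=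
    fun i _ => Finset.sum_nonneg fun j _ => mul_self_nonneg _
  have h0 : ∑ i, ∑ j, M i j * M i j = 0 := by
    refine le_antisymm ?_ (Finset.sum_nonneg hnn)
    rw [← trace_mul_transpose_eq]; exact h
  ext i j
  have h1 := (Finset.sum_eq_zero_iff_of_nonneg hnn).mp h0 i (Finset.mem_univ i)
  have h2 := (Finset.sum_eq_zero_iff_of_nonneg
    (fun j _ => mul_self_nonneg (M i j))).mp h1 j (Finset.mem_univ j)
  simpa using mul_self_eq_zero.mp h2

end NRDaux

open NRDaux Finset

/-- Every normally regular digraph is normal. -/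
theorem stmt1 (v : ℕ) (k l m : ℤ) (A : Matrix (Fin v) (Fin v) ℝ)
    (h : IsNRD v k l m A) : A * Aᵀ = Aᵀ * A := by
  obtain ⟨h01, hdiag, heq⟩ := h
  rcases Nat.eq_zero_or_pos v with hv0 | hvpos
  · subst hv0; ext i; exact i.elim0
  have hv : (0:ℝ) < (v:ℝ) := by exact_mod_cast hvpos
  set c : ℝ := (k:ℝ) - (m:ℝ) with hc
  set e : ℝ := (l:ℝ) - (m:ℝ) with he
  set un : Fin v → ℝ := fun _ => 1 with hun
  have hJ : allOnes v = vecMulVec un un := by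
    ext i j; simp [allOnes, Matrix.vecMulVec_apply, hun]
  have hN : A * Aᵀ = c • (1 : Matrix (Fin v) (Fin v) ℝ) + e • (A + Aᵀ)
      + (m:ℝ) • vecMulVec un un := by
    rw [heq, hJ, hc, he]; module
  -- row sums are k
  have hrow : ∀ i, ∑ t, A i t = (k:ℝ) := by
    intro i
    have h1 := congrFun (congrFun hN i) i
    simp only [Matrix.mul_apply, Matrix.transpose_apply, Matrix.add_apply, Matrix.smul_apply,
      smul_eq_mul, Matrix.one_apply_eq, Matrix.vecMulVec_apply, hdiag i, hun] at h1
    have h2 : (∑ t, A i t * A i t) = ∑ t, A i t :=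
      Finset.sum_congr rfl (fun t _ => by rcases h01 i t with h' | h' <;> simp [h'])
    rw [h2] at h1
    rw [h1, hc]; ring
  have hA1 : A *ᵥ un = (k:ℝ) • un := by
    funext i
    simp only [Matrix.mulVec, dotProduct, hun, mul_one, Pi.smul_apply, smul_eq_mul]
    simpa using hrow i
  set d : Fin v → ℝ := Aᵀ *ᵥ un with hd
  set u : Fin v → ℝ := d - (k:ℝ) • un with hu
  have hunun : un ⬝ᵥ un = (v:ℝ) := by
    simp [dotProduct, hun]
  have hdui : ∀ i, d i = u i + (k:ℝ) := by
    intro i; rw [hu]; simp [hun]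
  set W : ℝ := u ⬝ᵥ u with hW
  set γ : ℝ := c + 2*e*(k:ℝ) + (m:ℝ)*(v:ℝ) - (k:ℝ)^2 with hγ
  set α : ℝ := c + e^2 - γ with hα
  have hund : un ⬝ᵥ d = (v:ℝ)*(k:ℝ) := by
    rw [hd, dotProduct_mulVec, vecMul_transpose, hA1, smul_dotProduct, hunun, smul_eq_mul, mul_comm]
  have hun_u : un ⬝ᵥ u = 0 := by
    rw [hu, dotProduct_sub, dotProduct_smul, hund, hunun, smul_eq_mul]; ring
  have hu_un : u ⬝ᵥ un = 0 := by rw [dotProduct_comm]; exact hun_u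
  have hAd : A *ᵥ d = (c + e*(k:ℝ) + (m:ℝ)*(v:ℝ)) • un + e • d := by
    have h1 : A *ᵥ d = (A * Aᵀ) *ᵥ un := by rw [hd, mulVec_mulVec]
    rw [h1, hN, add_mulVec, add_mulVec, smul_mulVec, smul_mulVec,
      smul_mulVec, one_mulVec, add_mulVec, hA1, vmv_mulVec, hunun, ← hd]
    funext i
    simp only [Pi.add_apply, Pi.smul_apply, smul_eq_mul, hun]
    ring
  have hAu : A *ᵥ u = γ • un + e • u := by
    rw [hu, mulVec_sub, mulVec_smul, hA1, hAd, ← hu]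
    funext i
    simp only [Pi.add_apply, Pi.sub_apply, Pi.smul_apply, smul_eq_mul, hun]
    rw [hγ, hdui i]; ring
  have hud : u ⬝ᵥ d = (v:ℝ)*γ := by
    rw [hd, dotProduct_mulVec, vecMul_transpose, hAu, add_dotProduct, smul_dotProduct,
      smul_dotProduct, hunun, hu_un, smul_eq_mul, smul_eq_mul, mul_comm]
    ring
  have hWγ : W = (v:ℝ)*γ := by
    rw [hW]
    nth_rewrite 2 [hu]
    rw [dotProduct_sub, dotProduct_smul, hud, hu_un, smul_eq_mul]; ring
  have hJu : vecMulVec un un *ᵥ u = 0 := by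
    rw [vmv_mulVec, hun_u, zero_smul]
  have hNu : (A*Aᵀ) *ᵥ u = c • u + e • (A *ᵥ u) + e • (Aᵀ *ᵥ u) := by
    rw [hN, add_mulVec, add_mulVec, smul_mulVec, smul_mulVec,
      smul_mulVec, one_mulVec, add_mulVec, hJu, smul_zero, add_zero, smul_add,
      ← add_assoc]
  have hYu : (Aᵀ*A) *ᵥ u = γ • d + e • (Aᵀ *ᵥ u) := by
    rw [← mulVec_mulVec, hAu, mulVec_add, mulVec_smul, mulVec_smul, ← hd]
  have hDu : (A*Aᵀ - Aᵀ*A) *ᵥ u = (γ*(e-(k:ℝ))) • un + α • u := by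
    rw [sub_mulVec, hNu, hYu, hAu]
    funext i
    simp only [Pi.add_apply, Pi.sub_apply, Pi.smul_apply, smul_eq_mul, hun]
    rw [hα, hdui i]; ring
  have hD1 : (A*Aᵀ - Aᵀ*A) *ᵥ un = γ • un + (e-(k:ℝ)) • u := by
    have h1 : (Aᵀ*A) *ᵥ un = (k:ℝ) • d := by rw [← mulVec_mulVec, hA1, mulVec_smul, ← hd]
    have h2 : (A*Aᵀ) *ᵥ un = A *ᵥ d := by rw [← mulVec_mulVec, ← hd]
    rw [sub_mulVec, h1, h2, hAd]
    funext i
    simp only [Pi.add_apply, Pi.sub_apply, Pi.smul_apply, smul_eq_mul, hun]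
    rw [hγ, hdui i]; ring
  have hd1 : un ⬝ᵥ ((A*Aᵀ - Aᵀ*A) *ᵥ un) = (v:ℝ)*γ := by
    rw [hD1, dotProduct_add, dotProduct_smul, dotProduct_smul, hunun, hun_u,
      smul_eq_mul, smul_eq_mul]
    ring
  have hd2 : u ⬝ᵥ ((A*Aᵀ - Aᵀ*A) *ᵥ un) = (e-(k:ℝ))*W := by
    rw [hD1, dotProduct_add, dotProduct_smul, dotProduct_smul, hu_un, ← hW,
      smul_eq_mul, smul_eq_mul]
    ring
  have hd3 : un ⬝ᵥ ((A*Aᵀ - Aᵀ*A) *ᵥ u) = γ*(e-(k:ℝ))*(v:ℝ) := by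
    rw [hDu, dotProduct_add, dotProduct_smul, dotProduct_smul, hunun, hun_u,
      smul_eq_mul, smul_eq_mul]
    ring
  have hd4 : u ⬝ᵥ ((A*Aᵀ - Aᵀ*A) *ᵥ u) = α*W := by
    rw [hDu, dotProduct_add, dotProduct_smul, dotProduct_smul, hu_un, ← hW,
      smul_eq_mul, smul_eq_mul]
    ring
  set D : Matrix (Fin v) (Fin v) ℝ := A * Aᵀ - Aᵀ * A with hD
  have htrD : D.trace = 0 := by
    rw [hD, trace_sub, trace_mul_comm, sub_self]
  have htrDA : (D * A).trace = 0 := by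
    rw [hD, sub_mul, trace_sub]
    have h1 : (A * Aᵀ * A).trace = (Aᵀ * A * A).trace := by
      rw [mul_assoc, trace_mul_comm]
    rw [h1, sub_self]
  have htrDAt : (D * Aᵀ).trace = 0 := by
    rw [hD, sub_mul, trace_sub]
    have h1 : (Aᵀ * A * Aᵀ).trace = (A * Aᵀ * Aᵀ).trace := by
      rw [mul_assoc, trace_mul_comm]
    rw [h1, sub_self]
  have htrDJ : (D * vecMulVec un un).trace = (v:ℝ)*γ := by
    rw [trace_mul_vmv, hD, hd1]
  have htrDN : (D * (A * Aᵀ)).trace = (m:ℝ)*((v:ℝ)*γ) := by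
    conv_lhs => rw [hN]
    rw [mul_add, mul_add, trace_add, trace_add, mul_smul_comm, mul_smul_comm,
      mul_smul_comm, trace_smul, trace_smul, trace_smul, mul_one, htrD, mul_add,
      trace_add, htrDA, htrDAt, htrDJ]
    simp
  have hDsym : Dᵀ = D := by
    rw [hD]
    simp [Matrix.transpose_sub, Matrix.transpose_mul]
  have hvmvu : vecMulVec un u = vecMulVec un d - (k:ℝ) • vecMulVec un un := by
    ext i j
    simp only [Matrix.sub_apply, Matrix.smul_apply, Matrix.vecMulVec_apply, smul_eq_mul, hun]
    rw [hdui j]; ring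
  have hAS : A * (A + Aᵀ) - (A + Aᵀ) * A = D := by
    rw [hD]; noncomm_ring
  have hAJ : A * vecMulVec un un = (k:ℝ) • vecMulVec un un := by
    rw [mul_vmv, hA1, vmv_smul_left]
  have hJA : vecMulVec un un * A = vecMulVec un d := by
    rw [vmv_mul, ← hd]
  have hstar : A * D = e • D - (m:ℝ) • vecMulVec un u := by
    have h1 : A * D = A * (A * Aᵀ) - (A * Aᵀ) * A := by
      rw [hD, mul_sub, mul_assoc]
    rw [h1, hN, hvmvu, ← hAS]
    rw [mul_add, mul_add, add_mul, add_mul, mul_smul_comm, mul_smul_comm, mul_smul_comm,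
      smul_mul_assoc, smul_mul_assoc, smul_mul_assoc, mul_one, one_mul, hAJ, hJA]
    module
  have hstarT : D * Aᵀ = e • D - (m:ℝ) • vecMulVec u un := by
    have h1 := congrArg Matrix.transpose hstar
    rw [Matrix.transpose_mul, hDsym, Matrix.transpose_sub, Matrix.transpose_smul,
      Matrix.transpose_smul, hDsym, vmv_transpose] at h1
    exact h1
  have htrDY : (D * (Aᵀ * A)).trace = -((m:ℝ)*((v:ℝ)*γ)) := by
    rw [← mul_assoc, hstarT, sub_mul, trace_sub, smul_mul_assoc, smul_mul_assoc,
      trace_smul, trace_smul, htrDA, vmv_mul, ← hd, trace_vmv, hud]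
    simp
  have htrDD : (D * D).trace = 2*((m:ℝ)*((v:ℝ)*γ)) := by
    have h1 : D * D = D * (A * Aᵀ) - D * (Aᵀ * A) := by
      conv_lhs => rw [hD]
      rw [mul_sub]
    rw [h1, trace_sub, htrDN, htrDY]; ring
  by_cases hcase : (m:ℝ) * ((v:ℝ)*γ) ≤ 0
  · -- trace(D*D) ≤ 0 forces D = 0
    have h0 : (D * Dᵀ).trace ≤ 0 := by
      rw [hDsym, htrDD]; linarith
    have hD0 := eq_zero_of_trace_nonpos D h0
    rw [hD] at hD0
    exact sub_eq_zero.mp hD0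
  · push_neg at hcase
    have hWnn : 0 ≤ W := by
      rw [hW]
      exact Finset.sum_nonneg fun i _ => mul_self_nonneg _
    have hWpos : 0 < W := by
      rcases hWnn.lt_or_eq with h' | h'
      · exact h'
      · exfalso
        rw [← h'] at hWγ
        rw [← hWγ] at hcase
        simp at hcase
    have hvW : 0 < (v:ℝ)*W := mul_pos hv hWpos
    have hW2 : W*W = (v:ℝ)*γ*W := by rw [hWγ]
    set Q : Matrix (Fin v) (Fin v) ℝ :=
      (W*γ) • vecMulVec un un + (W*(e-(k:ℝ))) • (vecMulVec u un + vecMulVec un u)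
        + ((v:ℝ)*α) • vecMulVec u u with hQ
    have hQ1 : Q *ᵥ un = ((v:ℝ)*W) • (D *ᵥ un) := by
      rw [hQ, add_mulVec, add_mulVec, smul_mulVec, smul_mulVec,
        smul_mulVec, add_mulVec, vmv_mulVec, vmv_mulVec, vmv_mulVec, vmv_mulVec,
        hunun, hu_un, hD1]
      funext i
      simp only [Pi.add_apply, Pi.smul_apply, smul_eq_mul, hun, zero_smul, Pi.zero_apply]
      ring
    have hQu : Q *ᵥ u = ((v:ℝ)*W) • (D *ᵥ u) := by
      rw [hQ, add_mulVec, add_mulVec, smul_mulVec, smul_mulVec,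
        smul_mulVec, add_mulVec, vmv_mulVec, vmv_mulVec, vmv_mulVec, vmv_mulVec,
        hun_u, ← hW, hDu]
      funext i
      simp only [Pi.add_apply, Pi.smul_apply, smul_eq_mul, hun, zero_smul, Pi.zero_apply]
      linear_combination (e-(k:ℝ)) * hW2
    have htrMQ : ∀ M : Matrix (Fin v) (Fin v) ℝ, (M * Q).trace =
        (W*γ)*(un ⬝ᵥ (M *ᵥ un)) + (W*(e-(k:ℝ)))*((un ⬝ᵥ (M *ᵥ u)) + (u ⬝ᵥ (M *ᵥ un)))
          + ((v:ℝ)*α)*(u ⬝ᵥ (M *ᵥ u)) := by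
      intro M
      rw [hQ, mul_add, mul_add, trace_add, trace_add, mul_smul_comm, mul_smul_comm,
        mul_smul_comm, trace_smul, trace_smul, trace_smul, mul_add, trace_add,
        trace_mul_vmv, trace_mul_vmv, trace_mul_vmv, trace_mul_vmv]
      simp only [smul_eq_mul]
    have hTDQ : (D * Q).trace = (v:ℝ)*W*(γ^2 + 2*(e-(k:ℝ))^2*γ + α^2) := by
      rw [htrMQ D, hd1, hd2, hd3, hd4]
      linear_combination (e-(k:ℝ))^2 * hW2
    have hTQQ : (Q * Q).trace = (v:ℝ)*W*((D * Q).trace) := by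
      rw [htrMQ Q, hQ1, hQu, dotProduct_smul, dotProduct_smul, dotProduct_smul,
        dotProduct_smul, htrMQ D]
      simp only [smul_eq_mul]
      ring
    set R : Matrix (Fin v) (Fin v) ℝ := ((v:ℝ)*W) • D - Q with hR
    have hQsym : Qᵀ = Q := by
      rw [hQ]
      simp only [Matrix.transpose_add, Matrix.transpose_smul, vmv_transpose]
      abel_nf
    have hRsym : Rᵀ = R := by
      rw [hR, Matrix.transpose_sub, Matrix.transpose_smul, hDsym, hQsym]
    have hRR : (R * Rᵀ).trace =
        ((v:ℝ)*W)*(((v:ℝ)*W)*(2*((m:ℝ)*((v:ℝ)*γ))) - (D*Q).trace) := by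
      rw [hRsym, hR, sub_mul, mul_sub, mul_sub, trace_sub, trace_sub, trace_sub,
        smul_mul_assoc, smul_mul_assoc, mul_smul_comm, mul_smul_comm, trace_smul,
        trace_smul, trace_smul, trace_smul, htrDD, hTQQ, trace_mul_comm Q D]
      simp only [smul_eq_mul]
      ring
    have h0 : 0 ≤ (R * Rᵀ).trace := trace_mul_transpose_nonneg R
    have hineq : γ^2 + 2*(e-(k:ℝ))^2*γ + α^2 ≤ 2*((m:ℝ)*((v:ℝ)*γ)) := by
      rw [hRR, hTDQ, ← mul_sub] at h0
      have h1 := (mul_nonneg_iff_of_pos_left hvW).mp h0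
      have h2 := (mul_nonneg_iff_of_pos_left hvW).mp h1
      linarith
    have hmv : (m:ℝ)*(v:ℝ) = γ - c - 2*e*(k:ℝ) + (k:ℝ)^2 := by rw [hγ]; ring
    have hiden : 2*((m:ℝ)*((v:ℝ)*γ)) - (γ^2 + 2*(e-(k:ℝ))^2*γ + α^2) = -((c+e^2)^2) := by
      rw [hα]; linear_combination (2*γ) * hmv
    have hs2 : (c + e^2)^2 ≤ 0 := by linarith
    have hs : c + e^2 = 0 := by
      have h00 : (c+e^2)^2 = 0 := le_antisymm hs2 (sq_nonneg _)
      exact (pow_eq_zero_iff (by norm_num : (2:ℕ) ≠ 0)).mp h00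
    -- combinatorial finish: A must be symmetric
    have harc : ∀ i j, A i j = 1 → A j i = 1 := by
      intro i j hij
      rcases h01 j i with hji | hji
      · exfalso
        have hne : i ≠ j := by
          intro hcon
          rw [hcon, hdiag j] at hij
          norm_num at hij
        have hNij := congrFun (congrFun hN i) j
        simp only [Matrix.mul_apply, Matrix.transpose_apply, Matrix.add_apply,
          Matrix.smul_apply, smul_eq_mul, Matrix.one_apply_ne hne,
          Matrix.vecMulVec_apply, hun, hij, hji] at hNij
        -- hNij : ∑ t, A i t * A j t = c*0 + e*(1+0) + m*(1*1)
        have hsplit : ∑ t ∈ Finset.univ.erase j, A i t * A j t + A i j * A j j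
            = ∑ t, A i t * A j t := Finset.sum_erase_add _ _ (Finset.mem_univ j)
        rw [hdiag j, mul_zero, add_zero] at hsplit
        have hb1 : ∑ t ∈ Finset.univ.erase j, A i t * A j t
            ≤ ∑ t ∈ Finset.univ.erase j, A i t :=
          Finset.sum_le_sum (fun t _ => by
            rcases h01 i t with h' | h' <;> rcases h01 j t with h'' | h'' <;>
              simp [h', h''])
        have hb2 : ∑ t ∈ Finset.univ.erase j, A i t + A i j = ∑ t, A i t :=
          Finset.sum_erase_add _ _ (Finset.mem_univ j)
        rw [hrow i] at hb2
        rw [hij] at hb2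
        have hfin : e + (m:ℝ) ≤ (k:ℝ) - 1 := by
          linarith only [hNij, hsplit, hb1, hb2]
        have hqe : (2*e+1)^2 = 4*e^2+4*e+1 := by ring
        linarith only [hfin, hqe, sq_nonneg (2*e+1), hs, hc]
      · exact hji
    have hsymA : Aᵀ = A := by
      ext i j
      rw [Matrix.transpose_apply]
      rcases h01 i j with hx | hx
      · rcases h01 j i with hy | hy
        · rw [hx, hy]
        · have := harc j i hy
          rw [hx] at this
          norm_num at this
      · rw [harc i j hx, hx]
    rw [hsymA]
end

section
/- If a normally regular digraph with parameters (v,k,λ,μ) exists and v ≡ 1 (mod 4), then the Diophantine equation x² − μ·y² = η·z² (with η = k − μ + (μ−λ)²) has a nontrivial integer solution; if v ≡ 3 (mod 4), then x² + μ·y² = η·z² has a nontrivial integer solution. -/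
open Matrix

section Aux
open Finset

lemma elimQ : ∀ (n : ℕ) (c : Fin n → (Fin (n+1) → ℚ)),
    ∃ x : Fin (n+1) → ℚ, x (Fin.last n) = 1 ∧
      ∀ i : Fin n, (c i ⬝ᵥ x)^2 = (x i.castSucc)^2 := by
  intro n
  induction n with
  | zero =>
    intro c
    exact ⟨fun _ => 1, rfl, fun i => i.elim0⟩
  | succ n ih =>
    intro c
    set a : ℚ := c 0 0 with ha
    set ε : ℚ := if a = 1 then -1 else 1 with hε
    have hne : ε - a ≠ 0 := by
      rcases eq_or_ne a 1 with h | h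
      · simp [hε, h]; norm_num
      · simpa [hε, h] using sub_ne_zero_of_ne h.symm
    -- reduced coefficients
    set c' : Fin n → Fin (n+1) → ℚ :=
      fun i j => c i.succ j.succ + c i.succ 0 * (c 0 j.succ / (ε - a)) with hc'
    obtain ⟨y, hy_last, hy⟩ := ih c'
    set x0 : ℚ := (∑ j, c 0 j.succ * y j) / (ε - a) with hx0
    refine ⟨Fin.cons x0 y, ?_, ?_⟩
    · rw [← Fin.succ_last, Fin.cons_succ]; exact hy_last
    · have hdot : ∀ i : Fin (n+1), c i ⬝ᵥ Fin.cons x0 y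
          = c i 0 * x0 + ∑ j, c i j.succ * y j := by
        intro i
        rw [dotProduct, Fin.sum_univ_succ]
        simp [Fin.cons_succ, Fin.cons_zero]
      intro i
      refine Fin.cases ?_ ?_ i
      · -- i = 0
        have h0 : c 0 ⬝ᵥ Fin.cons x0 y = ε * x0 := by
          rw [hdot]
          rw [hx0]
          field_simp
          ring
        rw [h0, Fin.castSucc_zero, Fin.cons_zero]
        have : ε^2 = 1 := by rcases eq_or_ne a 1 with h | h <;> simp [hε, h]
        rw [mul_pow, this, one_mul]
      · intro i
        have hsub : c i.succ ⬝ᵥ Fin.cons x0 y = c' i ⬝ᵥ y := by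
          rw [hdot, hc']
          simp only [dotProduct]
          have hterm : ∀ j : Fin (n+1),
              (c i.succ j.succ + c i.succ 0 * (c 0 j.succ / (ε - a))) * y j
              = c i.succ j.succ * y j + c i.succ 0 * (c 0 j.succ * y j * (ε - a)⁻¹) := by
            intro j; field_simp
          rw [Finset.sum_congr rfl (fun j _ => hterm j), Finset.sum_add_distrib, add_comm]
          congr 1
          rw [hx0, div_eq_mul_inv, Finset.sum_mul, Finset.mul_sum]
        rw [hsub, hy i, ← Fin.succ_castSucc, Fin.cons_succ]

lemma fourT (η : ℚ) (hη : η ≠ 0) (a b c d : ℚ) (habcd : a^2+b^2+c^2+d^2 = η) :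
    ∃ T : Matrix (Fin 4) (Fin 4) ℚ,
      ∀ z : Fin 4 → ℚ, η * (∑ i, ((T *ᵥ z) i)^2) = ∑ i, (z i)^2 := by
  refine ⟨η⁻¹ • !![a,-b,-c,-d; b,a,-d,c; c,d,a,-b; d,-c,b,a], fun z => ?_⟩
  simp [Matrix.mulVec, dotProduct, Fin.sum_univ_four, Matrix.smul_apply,
    Matrix.cons_val_zero, Matrix.cons_val_one]
  subst habcd
  field_simp
  ring

lemma blockT (η : ℚ) (hη : η ≠ 0) (a b c d : ℚ) (habcd : a^2+b^2+c^2+d^2 = η) (t : ℕ) :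
    ∃ W : Matrix (Fin 4 × Fin t) (Fin 4 × Fin t) ℚ,
      ∀ z : Fin 4 × Fin t → ℚ, η * (∑ p, ((W *ᵥ z) p)^2) = ∑ p, (z p)^2 := by
  obtain ⟨T, hT⟩ := fourT η hη a b c d habcd
  refine ⟨Matrix.blockDiagonal (fun _ : Fin t => T), fun z => ?_⟩
  have hmv : ∀ (i : Fin 4) (s : Fin t),
      (Matrix.blockDiagonal (fun _ : Fin t => T) *ᵥ z) (i, s)
        = (T *ᵥ fun j => z (j, s)) i := by
    intro i s
    simp only [Matrix.mulVec, dotProduct, Fintype.sum_prod_type,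
      Matrix.blockDiagonal_apply]
    rw [Finset.sum_comm]
    rw [Fintype.sum_eq_single s ?_]
    · simp
    · intro s' hs'
      simp [Ne.symm hs']
  rw [Fintype.sum_prod_type_right, Fintype.sum_prod_type_right, Finset.mul_sum]
  refine Finset.sum_congr rfl fun s _ => ?_
  rw [← hT (fun j => z (j, s))]
  congr 1
  exact Finset.sum_congr rfl fun i _ => by rw [hmv i s]

lemma keyQ1 (t : ℕ) (η m : ℚ) (hη : η ≠ 0) (a b c d : ℚ)
    (habcd : a^2+b^2+c^2+d^2 = η)
    (N : Matrix (Fin (4*t+1)) (Fin (4*t+1)) ℚ)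
    (hN : ∀ x : Fin (4*t+1) → ℚ,
      ∑ j, ((x ᵥ* N) j)^2 = η * ∑ i, (x i)^2 + m * (∑ i, x i)^2) :
    ∃ X Y : ℚ, X^2 - m * Y^2 = η := by
  obtain ⟨W, hW⟩ := blockT η hη a b c d habcd t
  set E : (Fin 4 × Fin t) ⊕ Fin 1 ≃ Fin (4*t+1) :=
    (Equiv.sumCongr finProdFinEquiv (Equiv.refl (Fin 1))).trans finSumFinEquiv with hE
  set T : Matrix (Fin (4*t+1)) (Fin (4*t+1)) ℚ :=
    (Matrix.fromBlocks W 0 0 (1 : Matrix (Fin 1) (Fin 1) ℚ)).submatrix E.symm E.symm with hT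
  have hmv : ∀ z : Fin (4*t+1) → ℚ, T *ᵥ z =
      (Matrix.fromBlocks W 0 0 (1 : Matrix (Fin 1) (Fin 1) ℚ) *ᵥ (z ∘ E)) ∘ E.symm := by
    intro z
    rw [hT, Matrix.submatrix_mulVec_equiv]
    simp
  have hFB : ∀ z : Fin (4*t+1) → ℚ,
      (Matrix.fromBlocks W 0 0 (1 : Matrix (Fin 1) (Fin 1) ℚ) *ᵥ (z ∘ E))
        = Sum.elim (W *ᵥ fun q => z (E (Sum.inl q))) (fun j => z (E (Sum.inr j))) := by
    intro z
    rw [show (z ∘ E) = Sum.elim (z ∘ E ∘ Sum.inl) (z ∘ E ∘ Sum.inr) from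
      (Sum.elim_comp_inl_inr _).symm, Matrix.fromBlocks_mulVec]
    simp [Matrix.mulVec_zero, Function.comp]
    rfl
  have hinl : ∀ z : Fin (4*t+1) → ℚ, ∀ p,
      (T *ᵥ z) (E (Sum.inl p)) = (W *ᵥ fun q => z (E (Sum.inl q))) p := by
    intro z p; rw [hmv, Function.comp_apply, Equiv.symm_apply_apply, hFB]; rfl
  have hinr : ∀ z : Fin (4*t+1) → ℚ, ∀ j,
      (T *ᵥ z) (E (Sum.inr j)) = z (E (Sum.inr j)) := by
    intro z j; rw [hmv, Function.comp_apply, Equiv.symm_apply_apply, hFB]; rfl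
  have hEinl : ∀ p, E (Sum.inl p) = (finProdFinEquiv p).castSucc := by
    intro p; rfl
  have hEinr : E (Sum.inr 0) = Fin.last (4*t) := by
    apply Fin.ext; simp [hE, finSumFinEquiv]
  -- the transform identity
  have F4 : ∀ z : Fin (4*t+1) → ℚ,
      η * ∑ i, ((T *ᵥ z) i)^2
        = (∑ j : Fin (4*t), (z j.castSucc)^2) + η * (z (Fin.last (4*t)))^2 := by
    intro z
    have hsplit : ∑ i, ((T *ᵥ z) i)^2
        = (∑ p : Fin 4 × Fin t, ((T *ᵥ z) (E (Sum.inl p)))^2)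
          + ((T *ᵥ z) (E (Sum.inr 0)))^2 := by
      rw [← Equiv.sum_comp E (fun i => ((T *ᵥ z) i)^2), Fintype.sum_sum_type]
      simp
    rw [hsplit, mul_add, hinr z 0, hEinr]
    congr 1
    have : ∀ p, ((T *ᵥ z) (E (Sum.inl p)))^2
        = ((W *ᵥ fun q => z (E (Sum.inl q))) p)^2 := fun p => by rw [hinl]
    rw [Finset.sum_congr rfl (fun p _ => this p), hW]
    rw [← Equiv.sum_comp finProdFinEquiv (fun j : Fin (4*t) => (z j.castSucc)^2)]
    exact Finset.sum_congr rfl fun p _ => by rw [← hEinl]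
  -- forms
  set c : Fin (4*t) → (Fin (4*t+1) → ℚ) :=
    fun j i => ∑ k, N k j.castSucc * T k i with hc
  have hforms : ∀ (z : Fin (4*t+1) → ℚ) (j : Fin (4*t)),
      c j ⬝ᵥ z = ((T *ᵥ z) ᵥ* N) j.castSucc := by
    intro z j
    simp only [hc, dotProduct, vecMul, mulVec, Finset.sum_mul, Finset.mul_sum]
    rw [Finset.sum_comm]
    exact Finset.sum_congr rfl fun k _ => Finset.sum_congr rfl fun i _ => by ring
  obtain ⟨z, hzlast, hzsq⟩ := elimQ (4*t) c
  have hmain := hN (T *ᵥ z)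
  rw [F4 z, hzlast] at hmain
  rw [Fin.sum_univ_castSucc (f := fun j => (((T *ᵥ z) ᵥ* N) j)^2)] at hmain
  have hcancel : ∀ j : Fin (4*t), (((T *ᵥ z) ᵥ* N) j.castSucc)^2 = (z j.castSucc)^2 := by
    intro j; rw [← hforms z j]; exact hzsq j
  rw [Finset.sum_congr rfl (fun j _ => hcancel j)] at hmain
  refine ⟨((T *ᵥ z) ᵥ* N) (Fin.last (4*t)), ∑ i, (T *ᵥ z) i, ?_⟩
  have := hmain
  ring_nf at this ⊢
  linarith [this]

lemma keyQ3 (t : ℕ) (η m : ℚ) (hη : η ≠ 0) (a b c d : ℚ)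
    (habcd : a^2+b^2+c^2+d^2 = η)
    (N : Matrix (Fin (4*t+3)) (Fin (4*t+3)) ℚ)
    (hN : ∀ x : Fin (4*t+3) → ℚ,
      ∑ j, ((x ᵥ* N) j)^2 = η * ∑ i, (x i)^2 + m * (∑ i, x i)^2) :
    ∃ X Y : ℚ, 1 + m * Y^2 = η * X^2 := by
  obtain ⟨W, hW⟩ := blockT η hη a b c d habcd (t+1)
  set E : (Fin 4 × Fin (t+1)) ≃ Fin (4*t+3+1) :=
    finProdFinEquiv.trans (finCongr (by ring)) with hE
  set T : Matrix (Fin (4*t+3+1)) (Fin (4*t+3+1)) ℚ :=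
    W.submatrix E.symm E.symm with hT
  have hmv : ∀ z : Fin (4*t+3+1) → ℚ, T *ᵥ z = (W *ᵥ (z ∘ E)) ∘ E.symm := by
    intro z
    rw [hT, Matrix.submatrix_mulVec_equiv]
    simp
  have HT : ∀ z : Fin (4*t+3+1) → ℚ,
      η * ∑ i, ((T *ᵥ z) i)^2 = ∑ i, (z i)^2 := by
    intro z
    rw [← Equiv.sum_comp E (fun i => ((T *ᵥ z) i)^2),
        ← Equiv.sum_comp E (fun i => (z i)^2)]
    have : ∀ p, ((T *ᵥ z) (E p))^2 = ((W *ᵥ (z ∘ E)) p)^2 := by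
      intro p; rw [hmv, Function.comp_apply, Equiv.symm_apply_apply]
    rw [Finset.sum_congr rfl (fun p _ => this p), hW]
    rfl
  set c : Fin (4*t+3) → (Fin (4*t+3+1) → ℚ) :=
    fun j i => ∑ k, N k j * T k.castSucc i with hc
  have hforms : ∀ (z : Fin (4*t+3+1) → ℚ) (j : Fin (4*t+3)),
      c j ⬝ᵥ z = ((fun k : Fin (4*t+3) => (T *ᵥ z) k.castSucc) ᵥ* N) j := by
    intro z j
    simp only [hc, dotProduct, vecMul, mulVec, Finset.sum_mul, Finset.mul_sum]
    rw [Finset.sum_comm]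
    exact Finset.sum_congr rfl fun k _ => Finset.sum_congr rfl fun i _ => by ring
  obtain ⟨z, hzlast, hzsq⟩ := elimQ (4*t+3) c
  set x' : Fin (4*t+3) → ℚ := fun k => (T *ᵥ z) k.castSucc with hx'
  have hmain := hN x'
  have hcancel : ∀ j : Fin (4*t+3), ((x' ᵥ* N) j)^2 = (z j.castSucc)^2 := by
    intro j; rw [← hforms z j]; exact hzsq j
  rw [Finset.sum_congr rfl (fun j _ => hcancel j)] at hmain
  -- η * ∑ x'^2 = ∑ z^2 - η * ((T*ᵥz) last)^2
  have hsum1 : η * ∑ k : Fin (4*t+3), (x' k)^2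
      = (∑ i, (z i)^2) - η * ((T *ᵥ z) (Fin.last (4*t+3)))^2 := by
    rw [← HT z, Fin.sum_univ_castSucc (f := fun i => ((T *ᵥ z) i)^2)]
    ring
  have hsum2 : ∑ i, (z i)^2
      = (∑ j : Fin (4*t+3), (z j.castSucc)^2) + 1 := by
    rw [Fin.sum_univ_castSucc (f := fun i => (z i)^2), hzlast]
    norm_num
  refine ⟨(T *ᵥ z) (Fin.last (4*t+3)), ∑ k, x' k, ?_⟩
  rw [hsum1, hsum2] at hmain
  linarith [hmain]

lemma etaNonneg (v : ℕ) (hv : 2 ≤ v) (ηQ m : ℚ) (N : Matrix (Fin v) (Fin v) ℚ)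
    (hN : ∀ x : Fin v → ℚ,
      ∑ j, ((x ᵥ* N) j)^2 = ηQ * ∑ i, (x i)^2 + m * (∑ i, x i)^2) :
    0 ≤ ηQ := by
  set i0 : Fin v := ⟨0, by omega⟩ with hi0
  set i1 : Fin v := ⟨1, by omega⟩ with hi1
  have hne : i0 ≠ i1 := by simp [hi0, hi1, Fin.ext_iff]
  set x : Fin v → ℚ := fun i => (if i = i0 then 1 else 0) - (if i = i1 then 1 else 0) with hx
  have hsum : ∑ i, x i = 0 := by
    simp [hx, Finset.sum_sub_distrib, Finset.sum_ite_eq']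
  have hsq : ∑ i, (x i)^2 = 2 := by
    have : ∀ i, (x i)^2 = (if i = i0 then 1 else 0) + (if i = i1 then 1 else 0) := by
      intro i
      rcases eq_or_ne i i0 with rfl | h0
      · simp [hx, hne]
      · rcases eq_or_ne i i1 with rfl | h1
        · simp [hx, h0]
        · simp [hx, h0, h1]
    rw [Finset.sum_congr rfl fun i _ => this i, Finset.sum_add_distrib]
    simp [Finset.sum_ite_eq']
    norm_num
  have hmain := hN x
  rw [hsum, hsq] at hmain
  have hnn : 0 ≤ ∑ j, ((x ᵥ* N) j)^2 := Finset.sum_nonneg fun j _ => sq_nonneg _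
  rw [hmain] at hnn
  norm_num at hnn
  linarith

lemma clear1 (mZ ηZ : ℤ) (X Y : ℚ) (hXY : X^2 - (mZ:ℚ) * Y^2 = (ηZ:ℚ)) :
    ∃ x y z : ℤ, ¬(x = 0 ∧ y = 0 ∧ z = 0) ∧ x^2 - mZ*y^2 = ηZ*z^2 := by
  refine ⟨X.num * Y.den, Y.num * X.den, (X.den : ℤ) * Y.den, ?_, ?_⟩
  · rintro ⟨-, -, hz⟩
    have := X.den_nz
    have := Y.den_nz
    rcases mul_eq_zero.mp hz with h | h <;> simp_all
  · have hdX : ((X.den : ℚ)) ≠ 0 := Nat.cast_ne_zero.mpr X.den_nz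
    have hdY : ((Y.den : ℚ)) ≠ 0 := Nat.cast_ne_zero.mpr Y.den_nz
    have hXn : (X.num : ℚ) = X * X.den := (div_eq_iff hdX).mp (Rat.num_div_den X)
    have hYn : (Y.num : ℚ) = Y * Y.den := (div_eq_iff hdY).mp (Rat.num_div_den Y)
    have : ((X.num * Y.den : ℤ) : ℚ)^2 - (mZ:ℚ) * ((Y.num * X.den : ℤ) : ℚ)^2
        = (ηZ:ℚ) * (((X.den : ℤ) * Y.den : ℤ) : ℚ)^2 := by
      push_cast
      rw [hXn, hYn]
      linear_combination ((X.den:ℚ)^2 * (Y.den:ℚ)^2) * hXY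
    exact_mod_cast this

lemma clear3 (mZ ηZ : ℤ) (X Y : ℚ) (hXY : 1 + (mZ:ℚ) * Y^2 = (ηZ:ℚ) * X^2) :
    ∃ x y z : ℤ, ¬(x = 0 ∧ y = 0 ∧ z = 0) ∧ x^2 + mZ*y^2 = ηZ*z^2 := by
  refine ⟨(X.den : ℤ) * Y.den, Y.num * X.den, X.num * Y.den, ?_, ?_⟩
  · rintro ⟨hz, -, -⟩
    have := X.den_nz
    have := Y.den_nz
    rcases mul_eq_zero.mp hz with h | h <;> simp_all
  · have hdX : ((X.den : ℚ)) ≠ 0 := Nat.cast_ne_zero.mpr X.den_nz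
    have hdY : ((Y.den : ℚ)) ≠ 0 := Nat.cast_ne_zero.mpr Y.den_nz
    have hXn : (X.num : ℚ) = X * X.den := (div_eq_iff hdX).mp (Rat.num_div_den X)
    have hYn : (Y.num : ℚ) = Y * Y.den := (div_eq_iff hdY).mp (Rat.num_div_den Y)
    have : (((X.den : ℤ) * Y.den : ℤ) : ℚ)^2 + (mZ:ℚ) * ((Y.num * X.den : ℤ) : ℚ)^2
        = (ηZ:ℚ) * ((X.num * Y.den : ℤ) : ℚ)^2 := by
      push_cast
      rw [hXn, hYn]
      linear_combination ((X.den:ℚ)^2 * (Y.den:ℚ)^2) * hXY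
    exact_mod_cast this

lemma toQ (v : ℕ) (k l m : ℤ) (A : Matrix (Fin v) (Fin v) ℝ) (h : IsNRD v k l m A) :
    ∃ N : Matrix (Fin v) (Fin v) ℚ, ∀ x : Fin v → ℚ,
      ∑ j, ((x ᵥ* N) j)^2
        = ((k - m + (m-l)^2 : ℤ) : ℚ) * ∑ i, (x i)^2 + (m:ℚ) * (∑ i, x i)^2 := by
  obtain ⟨h01, hdiag, heq⟩ := h
  set B : Matrix (Fin v) (Fin v) ℚ := Matrix.of fun i j => if A i j = 0 then 0 else 1 with hB
  have hA : ∀ i j, A i j = ((B i j : ℚ) : ℝ) := by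
    intro i j
    rcases h01 i j with h0 | h1
    · simp [hB, h0]
    · simp [hB, h1, one_ne_zero]
  set Jq : Matrix (Fin v) (Fin v) ℚ := Matrix.of fun _ _ => 1 with hJq
  have hBQ : B * Bᵀ = (k:ℚ) • (1 : Matrix (Fin v) (Fin v) ℚ) + (l:ℚ) • (B + Bᵀ) +
      (m:ℚ) • (Jq - 1 - B - Bᵀ) := by
    ext i j
    have hent := congrFun (congrFun heq i) j
    apply Rat.cast_injective (α := ℝ)
    have lhs : (((B * Bᵀ) i j : ℚ) : ℝ) = (A * Aᵀ) i j := by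
      simp only [Matrix.mul_apply, Matrix.transpose_apply]
      push_cast
      exact Finset.sum_congr rfl fun p _ => by rw [hA i p, hA j p]
    rw [lhs, hent]
    simp only [Matrix.add_apply, Matrix.smul_apply, Matrix.sub_apply, Matrix.one_apply,
      Matrix.transpose_apply, allOnes, hJq, Matrix.of_apply, smul_eq_mul]
    rw [hA i j, hA j i]
    push_cast
    rcases eq_or_ne i j with rfl | hij
    · simp only [if_pos rfl]
      push_cast
      ring
    · simp only [if_neg hij]
      push_cast
      ring
  set N : Matrix (Fin v) (Fin v) ℚ := B + (((m:ℚ) - l) • (1 : Matrix (Fin v) (Fin v) ℚ)) with hN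
  have hNNT : N * Nᵀ = ((k - m + (m-l)^2 : ℤ) : ℚ) • (1 : Matrix (Fin v) (Fin v) ℚ)
      + (m:ℚ) • Jq := by
    have hTT : Nᵀ = Bᵀ + (((m:ℚ) - l) • (1 : Matrix (Fin v) (Fin v) ℚ)) := by
      rw [hN, Matrix.transpose_add, Matrix.transpose_smul, Matrix.transpose_one]
    rw [hN, hTT, add_mul, mul_add, mul_add]
    simp only [Matrix.mul_smul, Matrix.smul_mul, Matrix.mul_one, Matrix.one_mul, smul_smul]
    rw [hBQ]
    push_cast
    module
  refine ⟨N, fun x => ?_⟩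
  have e1 : ∑ j, ((x ᵥ* N) j)^2 = (x ᵥ* N) ⬝ᵥ (x ᵥ* N) := by
    simp [dotProduct, sq]
  have e2 : (x ᵥ* N) ⬝ᵥ (x ᵥ* N) = x ⬝ᵥ ((N * Nᵀ) *ᵥ x) := by
    rw [← Matrix.mulVec_mulVec, Matrix.dotProduct_mulVec x, Matrix.mulVec_transpose]
  rw [e1, e2, hNNT]
  rw [Matrix.add_mulVec, Matrix.smul_mulVec, Matrix.smul_mulVec,
    Matrix.one_mulVec, dotProduct_add, dotProduct_smul, dotProduct_smul]
  have hJx : Jq *ᵥ x = fun _ => ∑ i, x i := by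
    ext i; simp [hJq, Matrix.mulVec, dotProduct]
  rw [hJx]
  have : x ⬝ᵥ (fun _ => ∑ i, x i) = (∑ i, x i) * (∑ i, x i) := by
    simp [dotProduct, ← Finset.sum_mul, mul_comm]
  rw [this]
  simp only [dotProduct, smul_eq_mul]
  have hsq : ∑ i, x i * x i = ∑ i, (x i)^2 :=
    Finset.sum_congr rfl fun i _ => (sq (x i)).symm
  rw [hsq]
  ring


end Aux

/-- Bruck–Ryser type conditions for normally regular digraphs with v odd. -/
theorem stmt5 (v : ℕ) (k l m : ℤ) (A : Matrix (Fin v) (Fin v) ℝ)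
    (h : IsNRD v k l m A) :
    (v % 4 = 1 → ∃ x y z : ℤ, ¬(x = 0 ∧ y = 0 ∧ z = 0) ∧
      x ^ 2 - m * y ^ 2 = (k - m + (m - l) ^ 2) * z ^ 2) ∧
    (v % 4 = 3 → ∃ x y z : ℤ, ¬(x = 0 ∧ y = 0 ∧ z = 0) ∧
      x ^ 2 + m * y ^ 2 = (k - m + (m - l) ^ 2) * z ^ 2) := by
  obtain ⟨N, hN⟩ := toQ v k l m A h
  constructor
  · intro hv4
    by_cases hη0 : k - m + (m - l)^2 = 0
    · exact ⟨0, 0, 1, by simp, by simp [hη0]⟩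
    rcases Nat.lt_or_ge v 2 with hv1 | hv2
    · -- v = 1
      have hv : v = 1 := by omega
      subst hv
      have h1 := hN (fun _ => 1)
      simp only [Finset.univ_unique, Finset.sum_singleton, Fin.default_eq_zero] at h1
      have hval : ((fun _ : Fin 1 => (1:ℚ)) ᵥ* N) 0 = N 0 0 := by
        simp [Matrix.vecMul, dotProduct]
      rw [hval] at h1
      have : (N 0 0)^2 - (m:ℚ) * (1:ℚ)^2 = ((k - m + (m-l)^2 : ℤ) : ℚ) := by
        push_cast at h1 ⊢
        linarith [h1]
      obtain ⟨x, y, z, hnt, heq⟩ := clear1 m (k - m + (m-l)^2) (N 0 0) 1 this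
      exact ⟨x, y, z, hnt, by linarith [heq]⟩
    · have hge : (0:ℚ) ≤ ((k - m + (m-l)^2 : ℤ) : ℚ) := etaNonneg v hv2 _ _ N hN
      have hpos : (0:ℤ) < k - m + (m-l)^2 :=
        lt_of_le_of_ne (by exact_mod_cast hge) (Ne.symm hη0)
      obtain ⟨a, b, c, d, habcd⟩ := Nat.sum_four_squares (k - m + (m-l)^2).toNat
      have habcdQ : ((a:ℚ))^2 + (b:ℚ)^2 + (c:ℚ)^2 + (d:ℚ)^2
          = ((k - m + (m-l)^2 : ℤ) : ℚ) := by
        have h2 := congrArg (Nat.cast : ℕ → ℚ) habcd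
        push_cast at h2
        rw [h2]
        exact_mod_cast congrArg (Int.cast : ℤ → ℚ) (Int.toNat_of_nonneg hpos.le)
      obtain ⟨t, ht⟩ : ∃ t, v = 4*t+1 := ⟨v/4, by omega⟩
      subst ht
      obtain ⟨X, Y, hXY⟩ := keyQ1 t _ _ (Int.cast_ne_zero.mpr hη0) _ _ _ _ habcdQ N hN
      obtain ⟨x, y, z, hnt, heq⟩ := clear1 m (k - m + (m-l)^2) X Y hXY
      exact ⟨x, y, z, hnt, by linarith [heq]⟩
  · intro hv4
    by_cases hη0 : k - m + (m - l)^2 = 0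
    · exact ⟨0, 0, 1, by simp, by simp [hη0]⟩
    have hv2 : 2 ≤ v := by omega
    have hge : (0:ℚ) ≤ ((k - m + (m-l)^2 : ℤ) : ℚ) := etaNonneg v hv2 _ _ N hN
    have hpos : (0:ℤ) < k - m + (m-l)^2 :=
      lt_of_le_of_ne (by exact_mod_cast hge) (Ne.symm hη0)
    obtain ⟨a, b, c, d, habcd⟩ := Nat.sum_four_squares (k - m + (m-l)^2).toNat
    have habcdQ : ((a:ℚ))^2 + (b:ℚ)^2 + (c:ℚ)^2 + (d:ℚ)^2
        = ((k - m + (m-l)^2 : ℤ) : ℚ) := by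
      have h2 := congrArg (Nat.cast : ℕ → ℚ) habcd
      push_cast at h2
      rw [h2]
      exact_mod_cast congrArg (Int.cast : ℤ → ℚ) (Int.toNat_of_nonneg hpos.le)
    obtain ⟨t, ht⟩ : ∃ t, v = 4*t+3 := ⟨v/4, by omega⟩
    subst ht
    obtain ⟨X, Y, hXY⟩ := keyQ3 t _ _ (Int.cast_ne_zero.mpr hη0) _ _ _ _ habcdQ N hN
    obtain ⟨x, y, z, hnt, heq⟩ := clear3 m (k - m + (m-l)^2) X Y hXY
    exact ⟨x, y, z, hnt, by linarith [heq]⟩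
end

section
/- If A is the adjacency matrix of a normally regular digraph with parameters (v,k,λ,μ), then J − I − A is the adjacency matrix of a normally regular digraph with parameters (v, v−k−1, v−2k+λ−1, v−2k+2λ−μ). -/
open Matrix

/-- The complement of a normally regular digraph is a normally regular digraph
    with parameters (v, v−k−1, v−2k+λ−1, v−2k+2λ−μ). -/
theorem stmt6 (v : ℕ) (k l m : ℤ) (A : Matrix (Fin v) (Fin v) ℝ)
    (h : IsNRD v k l m A) :
    IsNRD v ((v : ℤ) - k - 1) ((v : ℤ) - 2 * k + l - 1) ((v : ℤ) - 2 * k + 2 * l - m)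
      (allOnes v - 1 - A) := by
  obtain ⟨h01, hdiag, hAA⟩ := h
  set J := allOnes v with hJdef
  have hrow : ∀ i, ∑ x, A i x = (k : ℝ) := by
    intro i
    have hd := congrFun (congrFun hAA i) i
    simp only [Matrix.mul_apply, Matrix.add_apply, Matrix.smul_apply, Matrix.sub_apply,
      Matrix.one_apply_eq, Matrix.transpose_apply, hdiag i, hJdef, allOnes, Matrix.of_apply,
      smul_eq_mul] at hd
    have hsq : ∀ x, A i x * A i x = A i x := fun x => by rcases h01 i x with h | h <;> simp [h]
    simp only [hsq] at hd
    rw [hd]; ring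
  have hAJ : A * J = (k : ℝ) • J := by
    ext i j
    simp [Matrix.mul_apply, hJdef, allOnes, hrow i]
  have hJA : J * Aᵀ = (k : ℝ) • J := by
    ext i j
    simp [Matrix.mul_apply, hJdef, allOnes, Matrix.transpose_apply, hrow j]
  have hJJ : J * J = (v : ℝ) • J := by
    ext i j
    simp [Matrix.mul_apply, hJdef, allOnes]
  have hJT : Jᵀ = J := by
    ext i j
    simp [hJdef, allOnes]
  refine ⟨?_, ?_, ?_⟩
  · intro i j
    by_cases hij : i = j
    · subst hij
      left
      simp [hJdef, allOnes, hdiag i]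
    · rcases h01 i j with h | h
      · right; simp [hJdef, allOnes, Matrix.one_apply, hij, h]
      · left; simp [hJdef, allOnes, Matrix.one_apply, hij, h]
  · intro i
    simp [hJdef, allOnes, hdiag i]
  · have hT : (J - 1 - A)ᵀ = J - 1 - Aᵀ := by
      simp [Matrix.transpose_sub, hJT]
    rw [hT]
    have expand : (J - 1 - A) * (J - 1 - Aᵀ) =
        J * J - J - J * Aᵀ - (J - 1 - Aᵀ) - (A * J - A - A * Aᵀ) := by
      simp only [Matrix.sub_mul, Matrix.mul_sub, Matrix.mul_one, Matrix.one_mul]; abel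
    rw [expand, hJJ, hJA, hAJ, hAA]
    push_cast
    module
end

section
/- A tournament is normal (its adjacency matrix satisfies A·Aᵀ = Aᵀ·A) if and only if it is regular (every vertex has the same out-degree). -/
open Matrix

/-- A tournament is normal if and only if it is regular. -/
theorem stmt11 (v : ℕ) (A : Matrix (Fin v) (Fin v) ℝ)
    (h01 : ∀ i j, A i j = 0 ∨ A i j = 1) (hdiag : ∀ i, A i i = 0)
    (htour : A + Aᵀ = allOnes v - 1) :
    A * Aᵀ = Aᵀ * A ↔ ∃ k : ℝ, A * allOnes v = k • allOnes v ∧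
      allOnes v * A = k • allOnes v := by
  have hT : Aᵀ = allOnes v - 1 - A := by
    rw [eq_sub_iff_add_eq, add_comm]
    exact htour
  constructor
  · intro hN
    have hAJ : A * allOnes v = allOnes v * A := by
      rw [hT, mul_sub, mul_sub, sub_mul, sub_mul, mul_one, one_mul,
        sub_left_inj, sub_left_inj] at hN
      exact hN
    have key : ∀ i j, (∑ l, A i l) = ∑ l, A l j := by
      intro i j
      have := congrFun (congrFun hAJ i) j
      simpa [Matrix.mul_apply, allOnes] using this
    rcases Nat.eq_zero_or_pos v with hv | hv
    · subst hv
      exact ⟨0, by ext i j; exact i.elim0, by ext i j; exact i.elim0⟩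
    · set i0 : Fin v := ⟨0, hv⟩
      refine ⟨∑ l, A i0 l, ?_, ?_⟩
      · ext i j
        simp only [Matrix.mul_apply, Matrix.smul_apply, allOnes, Matrix.of_apply,
          mul_one, smul_eq_mul]
        rw [key i j, ← key i0 j]
      · ext i j
        simp only [Matrix.mul_apply, Matrix.smul_apply, allOnes, Matrix.of_apply,
          one_mul, mul_one, smul_eq_mul]
        exact (key i0 j).symm
  · rintro ⟨k, h1, h2⟩
    have hAJ : A * allOnes v = allOnes v * A := h1.trans h2.symm
    rw [hT, mul_sub, mul_sub, sub_mul, sub_mul, mul_one, one_mul, hAJ]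
end

section
/- If θ ≠ k is an eigenvalue of the adjacency matrix of a normally regular digraph with parameters (v,k,λ,μ), then |θ − (λ−μ)| = √η where η = k − μ + (μ−λ)²; i.e., all eigenvalues other than k lie on a circle in the complex plane with centre λ − μ and radius √η. -/
open Matrix

/-!
With `c = μ - λ` and `B = A + c I`, the defining identity becomes `B Bᵀ = η I + μ J`.
The row sums of `A` equal `k` (read off the diagonal of `A Aᵀ`, using that `A` is a
`{0,1}`-matrix with zero diagonal), so a left eigenvector `y` of `A` for `θ ≠ k`, which
exists because `A` and `Aᵀ` share their eigenvalues, satisfies `J y = 0`. Hence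
`|θ + c|² ‖y‖² = ‖Bᵀ y‖² = yᴴ B Bᵀ y = η ‖y‖²`. Working with a left eigenvector avoids
proving that `A` is normal.
-/

namespace Matrix

variable {n : Type*} [Fintype n]

theorem exists_transpose_mulVec_eq_smul {K : Type*} [Field K] [DecidableEq n]
    {M : Matrix n n K} {θ : K} {x : n → K} (hx : x ≠ 0) (hMx : M *ᵥ x = θ • x) :
    ∃ y ≠ 0, Mᵀ *ᵥ y = θ • y := by
  have hdet : (M - θ • 1).det = 0 :=
    exists_mulVec_eq_zero_iff.mp ⟨x, hx, by simp [sub_mulVec, smul_mulVec, hMx]⟩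
  have hdetT : (Mᵀ - θ • 1).det = 0 := by
    rw [← det_transpose]
    simpa [transpose_sub] using hdet
  obtain ⟨y, hy, hMy⟩ := exists_mulVec_eq_zero_iff.mpr hdetT
  exact ⟨y, hy, by simpa [sub_mulVec, smul_mulVec, sub_eq_zero] using hMy⟩

theorem sum_eq_zero_of_transpose_mulVec_eq_smul {K : Type*} [Field K] {M : Matrix n n K}
    {r θ : K} (hrow : ∀ i, ∑ j, M i j = r) {y : n → K} (hy : Mᵀ *ᵥ y = θ • y) (hθ : θ ≠ r) :
    ∑ i, y i = 0 := by
  have h : θ * ∑ i, y i = r * ∑ i, y i :=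
    calc θ * ∑ i, y i = (fun _ => 1) ⬝ᵥ (Mᵀ *ᵥ y) := by simp [hy, dotProduct, Finset.mul_sum]
      _ = (M *ᵥ fun _ => 1) ⬝ᵥ y := by rw [dotProduct_mulVec, vecMul_transpose]
      _ = r * ∑ i, y i := by simp [mulVec, dotProduct, hrow, Finset.mul_sum]
  by_contra hs
  exact hθ (mul_right_cancel₀ hs h)

theorem star_dotProduct_mul_conjTranspose_mulVec {R : Type*} [CommRing R] [StarRing R]
    {M : Matrix n n R} {y : n → R} {ν : R} (h : Mᴴ *ᵥ y = ν • y) :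
    star y ⬝ᵥ ((M * Mᴴ) *ᵥ y) = star ν * ν * (star y ⬝ᵥ y) := by
  rw [← mulVec_mulVec, dotProduct_mulVec, ← conjTranspose_conjTranspose M, ← star_mulVec,
    conjTranspose_conjTranspose, h]
  simp only [star_smul, smul_dotProduct, dotProduct_smul, smul_eq_mul]
  ring

open scoped ComplexOrder in
theorem norm_eq_sqrt_of_mul_transpose_eq [DecidableEq n]
    {B : Matrix n n ℝ} {η μ : ℝ} (hB : B * Bᵀ = η • 1 + μ • of fun _ _ => 1)
    {y : n → ℂ} (hy : y ≠ 0) (hsum : ∑ i, y i = 0) {ν : ℂ}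
    (hν : Bᵀ.map Complex.ofReal *ᵥ y = ν • y) : ‖ν‖ = √η := by
  set M := B.map Complex.ofReal
  have hMH : Mᴴ = Bᵀ.map Complex.ofReal := by ext; simp [M]
  have hMMy : (M * Mᴴ) *ᵥ y = (η : ℂ) • y := by
    have hmap : M * Mᴴ = (B * Bᵀ).map Complex.ofReal := by
      rw [hMH]; exact (Matrix.map_mul (f := Complex.ofRealHom)).symm
    rw [hmap, hB]
    ext i
    simp [mulVec, dotProduct, one_apply, add_mul, Finset.sum_add_distrib, ← Finset.mul_sum, hsum,
      apply_ite Complex.ofReal, ite_mul]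
  have hnormSq : (Complex.normSq ν : ℂ) = η := by
    have key := star_dotProduct_mul_conjTranspose_mulVec (by rwa [hMH])
    rw [hMMy, dotProduct_smul, smul_eq_mul] at key
    rw [Complex.normSq_eq_conj_mul_self]
    exact (mul_right_cancel₀ (dotProduct_star_self_eq_zero.not.mpr hy) key).symm
  rw [Complex.norm_def, Complex.ofReal_injective hnormSq]

end Matrix

namespace IsNRD

variable {v : ℕ} {k l m : ℤ} {A : Matrix (Fin v) (Fin v) ℝ}

theorem sum_row_eq (h : IsNRD v k l m A) (i : Fin v) : ∑ j, A i j = k := by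
  obtain ⟨h01, hdiag, hA⟩ := h
  have hdot : (A * Aᵀ) i i = ∑ j, A i j := by
    rw [mul_apply]
    exact Finset.sum_congr rfl fun j _ => by rcases h01 i j with h | h <;> simp [h]
  simpa [hdot, hdiag, allOnes] using congrFun (congrFun hA i) i

theorem add_smul_one_mul_transpose (h : IsNRD v k l m A) :
    (A + ((m : ℝ) - l) • 1) * (A + ((m : ℝ) - l) • 1)ᵀ =
      ((k : ℝ) - m + ((m : ℝ) - l) ^ 2) • 1 + (m : ℝ) • allOnes v := by
  simp only [transpose_add, transpose_smul, transpose_one, add_mul, mul_add, Matrix.smul_mul,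
    Matrix.mul_smul, Matrix.mul_one, Matrix.one_mul, h.2.2, smul_smul]
  match_scalars <;> ring

end IsNRD

/-- Every eigenvalue θ ≠ k of a normally regular digraph lies on the circle
    with centre λ − μ and radius √η, where η = k − μ + (μ−λ)². -/
theorem stmt12 (v : ℕ) (k l m : ℤ) (A : Matrix (Fin v) (Fin v) ℝ)
    (h : IsNRD v k l m A) (θ : ℂ) (x : Fin v → ℂ) (hx : x ≠ 0)
    (hev : (A.map (Complex.ofReal)).mulVec x = θ • x) (hθ : θ ≠ (k : ℂ)) :
    ‖θ - ((l : ℂ) - (m : ℂ))‖ =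
      Real.sqrt ((k : ℝ) - (m : ℝ) + ((m : ℝ) - (l : ℝ)) ^ 2) := by
  obtain ⟨y, hy, hAy⟩ := exists_transpose_mulVec_eq_smul hx hev
  have hsum : ∑ i, y i = 0 := sum_eq_zero_of_transpose_mulVec_eq_smul
    (fun i => by simp [← Complex.ofReal_sum, h.sum_row_eq i]) hAy hθ
  have hBy : (A + ((m : ℝ) - l) • 1)ᵀ.map Complex.ofReal *ᵥ y = (θ - ((l : ℂ) - m)) • y := by
    ext i
    have hi := congrFun hAy i
    simp [mulVec, dotProduct, add_mul, Finset.sum_add_distrib, one_apply,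
      apply_ite Complex.ofReal, ite_mul] at hi ⊢
    rw [hi]
    ring
  exact norm_eq_sqrt_of_mul_transpose_eq h.add_smul_one_mul_transpose hy hsum hBy
end

section
/- Let G be a connected k-regular digraph with a normal adjacency matrix A on v vertices, and suppose there exist real a, b such that every eigenvalue θ ≠ k of A satisfies |θ − a| = b. Then A satisfies A·Aᵀ = (b² − a² + c)·I + (a + c)·(A + Aᵀ) + c·(J − I − A − Aᵀ), where c = ((k−a)² − b²)/v. -/
open Matrix

/-!
Put `N = (A - a I)(A - a I)ᵀ - b² I - c J`. It is symmetric, and it commutes with `A` because `A`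
is normal and commutes with `J`. If `N ≠ 0`, some eigenspace of `N` for a nonzero eigenvalue is
`A`-invariant, so it contains an eigenvector `z` of `A`, say `A z = θ z`. Normality gives
`Aᵀ z = θ̄ z`, hence `N z = (|θ - a|² - b²) z - c J z`. If `θ = k`, connectedness makes `z`
constant, so `J z = v z` and `N z = 0` by the choice of `c`. Otherwise `J z = 0` since `J A = k J`,
and `|θ - a| = b`. Either way `N z = 0`, a contradiction; and `N = 0` is the claimed identity.
-/

open scoped ComplexOrder

namespace Matrix

variable {n : Type*}

theorem star_mulVec_dotProduct_mulVec {R : Type*} [CommSemiring R] [StarRing R] [Fintype n]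
    (M : Matrix n n R) (z : n → R) : star (M *ᵥ z) ⬝ᵥ (M *ᵥ z) = star z ⬝ᵥ ((Mᴴ * M) *ᵥ z) := by
  rw [star_mulVec, ← dotProduct_mulVec, mulVec_mulVec]

section StarOrderedRing

variable {R : Type*} [CommRing R] [StarRing R] [PartialOrder R] [StarOrderedRing R]
  [NoZeroDivisors R] [Fintype n] {M : Matrix n n R} {z : n → R}

theorem conjTranspose_mulVec_eq_zero_iff (hM : Commute M Mᴴ) :
    Mᴴ *ᵥ z = 0 ↔ M *ᵥ z = 0 := by
  rw [← dotProduct_star_self_eq_zero, ← dotProduct_star_self_eq_zero (v := M *ᵥ z),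
    star_mulVec_dotProduct_mulVec, star_mulVec_dotProduct_mulVec, conjTranspose_conjTranspose,
    hM.eq]

variable [DecidableEq n]

theorem conjTranspose_mulVec_eq_smul_of_commute (hM : Commute M Mᴴ) {θ : R}
    (hz : M *ᵥ z = θ • z) : Mᴴ *ᵥ z = star θ • z := by
  have hshift : Commute (M - θ • 1) (M - θ • 1)ᴴ := by
    rw [conjTranspose_sub, conjTranspose_smul, conjTranspose_one]
    exact (hM.sub_right ((Commute.one_right M).smul_right _)).sub_left
      ((Commute.one_left _).smul_left _)
  have := (conjTranspose_mulVec_eq_zero_iff hshift).2 (by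
    rw [sub_mulVec, smul_mulVec, one_mulVec, hz, sub_self])
  rwa [conjTranspose_sub, conjTranspose_smul, conjTranspose_one, sub_mulVec, smul_mulVec,
    one_mulVec, sub_eq_zero] at this

theorem mul_conjTranspose_mulVec_of_commute (hM : Commute M Mᴴ) {θ : R}
    (hz : M *ᵥ z = θ • z) : (M * Mᴴ) *ᵥ z = (star θ * θ) • z := by
  rw [← mulVec_mulVec, conjTranspose_mulVec_eq_smul_of_commute hM hz, mulVec_smul, hz, smul_smul]

end StarOrderedRing

section Field

variable {K : Type*} [Field K] [Fintype n]

theorem mulVec_eq_zero_of_mul_eq_smul {J B : Matrix n n K} {k θ : K} {z : n → K}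
    (hJB : J * B = k • J) (hz : B *ᵥ z = θ • z) (hθ : θ ≠ k) : J *ᵥ z = 0 := by
  have h : θ • (J *ᵥ z) = k • (J *ᵥ z) := by
    rw [← mulVec_smul, ← hz, mulVec_mulVec, hJB, smul_mulVec]
  rw [← sub_eq_zero, ← sub_smul, smul_eq_zero] at h
  exact h.resolve_left (sub_ne_zero.mpr hθ)

theorem exists_mulVec_eq_smul_of_commute [IsAlgClosed K] [DecidableEq n] {B N : Matrix n n K}
    (hBN : Commute B N) {μ : K} {z : n → K} (hz : z ≠ 0) (hNz : N *ᵥ z = μ • z) :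
    ∃ w : n → K, w ≠ 0 ∧ N *ᵥ w = μ • w ∧ ∃ θ : K, B *ᵥ w = θ • w := by
  set E := Module.End.eigenspace (toLin' N) μ
  have hBE : ∀ x ∈ E, toLin' B x ∈ E :=
    Module.End.mapsTo_genEigenspace_of_comm (hBN.map toLinAlgEquiv').symm μ 1
  have : Nontrivial E := ⟨⟨⟨z, by simpa [E] using hNz⟩, 0, by simpa using hz⟩⟩
  obtain ⟨θ, hθ⟩ := Module.End.exists_eigenvalue ((toLin' B).restrict hBE)
  obtain ⟨w, hw⟩ := hθ.exists_hasEigenvector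
  have hNw := w.2
  have hBw := hw.apply_eq_smul
  simp only [E, Module.End.mem_eigenspace_iff, toLin'_apply] at hNw
  rw [Subtype.ext_iff, LinearMap.coe_restrict_apply, Submodule.coe_smul, toLin'_apply] at hBw
  exact ⟨w, by simpa using hw.2, hNw, θ, hBw⟩

end Field

theorem IsHermitian.eq_zero_of_commute [Fintype n] {B N : Matrix n n ℂ} (hN : N.IsHermitian)
    (hBN : Commute B N) (h : ∀ (θ : ℂ) (z : n → ℂ), z ≠ 0 → B *ᵥ z = θ • z → N *ᵥ z = 0) :
    N = 0 := by
  classical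
  by_contra hne
  obtain ⟨z, t, ht, hz, hNz⟩ := hN.exists_eigenvector_of_ne_zero hne
  obtain ⟨w, hw, hNw, θ, hBw⟩ :=
    exists_mulVec_eq_smul_of_commute hBN hz (by rwa [← Complex.coe_smul] at hNz)
  rw [h θ w hw hBw, eq_comm, smul_eq_zero] at hNw
  exact hNw.elim (by simpa using ht) hw

theorem map_ofReal_transpose {m : Type*} (M : Matrix m n ℝ) :
    Mᵀ.map Complex.ofReal = (M.map Complex.ofReal)ᴴ := by
  rw [← conjTranspose_map _ (fun x => (Complex.conj_ofReal x).symm),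
    conjTranspose_eq_transpose_of_trivial]

theorem map_ofReal_mul {m l : Type*} [Fintype n] (M : Matrix m n ℝ) (N : Matrix n l ℝ) :
    (M * N).map Complex.ofReal = M.map Complex.ofReal * N.map Complex.ofReal :=
  Matrix.map_mul (f := Complex.ofRealHom)

theorem map_ofReal_sub_smul_one [DecidableEq n] (A : Matrix n n ℝ) (a : ℝ) :
    (A - a • 1).map Complex.ofReal = A.map Complex.ofReal - (a : ℂ) • 1 := by
  ext i j
  by_cases h : i = j <;> simp [h]

theorem sub_smul_one_mul_transpose_map_ofReal_mulVec [Fintype n] [DecidableEq n]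
    {A : Matrix n n ℝ} (hA : Commute A Aᵀ) (a : ℝ) {θ : ℂ} {z : n → ℂ}
    (hz : A.map Complex.ofReal *ᵥ z = θ • z) :
    ((A - a • 1) * (A - a • 1)ᵀ).map Complex.ofReal *ᵥ z = (‖θ - a‖ ^ 2 : ℂ) • z := by
  have hX : Commute (A - a • 1) (A - a • 1)ᵀ := by
    rw [transpose_sub, transpose_smul, transpose_one]
    exact (hA.sub_right ((Commute.one_right A).smul_right a)).sub_left
      ((Commute.one_left _).smul_left a)
  have hM : Commute ((A - a • 1).map Complex.ofReal) ((A - a • 1)ᵀ.map Complex.ofReal) :=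
    hX.map Complex.ofRealHom.mapMatrix
  rw [map_ofReal_transpose] at hM
  have hMz : (A - a • 1).map Complex.ofReal *ᵥ z = (θ - a) • z := by
    rw [map_ofReal_sub_smul_one, sub_mulVec, smul_mulVec, one_mulVec, hz, sub_smul]
  rw [map_ofReal_mul, map_ofReal_transpose, mul_conjTranspose_mulVec_of_commute hM hMz,
    Complex.star_def, Complex.conj_mul']

end Matrix

section RegularDigraph

variable {v : ℕ}

def circleDefect (A : Matrix (Fin v) (Fin v) ℝ) (a b c : ℝ) : Matrix (Fin v) (Fin v) ℝ :=
  (A - a • 1) * (A - a • 1)ᵀ - b ^ 2 • 1 - c • allOnes v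

theorem allOnes_isHermitian : (allOnes v).IsHermitian := by
  ext
  rfl

theorem circleDefect_map_ofReal_isHermitian (A : Matrix (Fin v) (Fin v) ℝ) (a b c : ℝ) :
    ((circleDefect A a b c).map Complex.ofReal).IsHermitian := by
  refine IsHermitian.map ?_ _ fun x => (Complex.conj_ofReal x).symm
  refine ((isHermitian_mul_conjTranspose_self _).sub (isHermitian_one.smul ?_)).sub
    (allOnes_isHermitian.smul ?_) <;> exact IsSelfAdjoint.all _

theorem commute_circleDefect {A : Matrix (Fin v) (Fin v) ℝ} (hA : Commute A Aᵀ)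
    (hAJ : Commute A (allOnes v)) (a b c : ℝ) :
    Commute (A.map Complex.ofReal) ((circleDefect A a b c).map Complex.ofReal) := by
  have hA1 (r : ℝ) : Commute A (r • 1) := (Commute.one_right A).smul_right r
  have hAX : Commute A (A - a • 1)ᵀ := by
    rw [transpose_sub, transpose_smul, transpose_one]
    exact hA.sub_right (hA1 a)
  exact Commute.map (((((Commute.refl A).sub_right (hA1 a)).mul_right hAX).sub_right
    (hA1 _)).sub_right (hAJ.smul_right c)) Complex.ofRealHom.mapMatrix

theorem circleDefect_map_ofReal_mulVec {A : Matrix (Fin v) (Fin v) ℝ} (hA : Commute A Aᵀ)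
    (a b c : ℝ) {θ : ℂ} {z : Fin v → ℂ} (hz : A.map Complex.ofReal *ᵥ z = θ • z) :
    (circleDefect A a b c).map Complex.ofReal *ᵥ z =
      (‖θ - a‖ ^ 2 - b ^ 2 : ℂ) • z - (c : ℂ) • ((allOnes v).map Complex.ofReal *ᵥ z) := by
  have hmap : (circleDefect A a b c).map Complex.ofReal =
      ((A - a • 1) * (A - a • 1)ᵀ).map Complex.ofReal - (b ^ 2 : ℂ) • 1 -
        (c : ℂ) • (allOnes v).map Complex.ofReal := by
    ext i j
    by_cases h : i = j <;> simp [circleDefect, h]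
  rw [hmap, sub_mulVec, sub_mulVec, sub_smul_one_mul_transpose_map_ofReal_mulVec hA a hz,
    smul_mulVec, one_mulVec, smul_mulVec, sub_smul]

theorem allOnes_map_ofReal_mulVec_of_forall_eq {z : Fin v → ℂ} (hz : ∀ i j, z i = z j) :
    (allOnes v).map Complex.ofReal *ᵥ z = (v : ℂ) • z := by
  ext i
  simp [allOnes, mulVec, dotProduct, hz _ i]

theorem mul_transpose_eq_of_circleDefect_eq_zero {A : Matrix (Fin v) (Fin v) ℝ} {a b c : ℝ}
    (h : circleDefect A a b c = 0) :
    A * Aᵀ = (b ^ 2 - a ^ 2 + c) • (1 : Matrix (Fin v) (Fin v) ℝ) + (a + c) • (A + Aᵀ) +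
      c • (allOnes v - 1 - A - Aᵀ) := by
  simp only [circleDefect, transpose_sub, transpose_smul, transpose_one, sub_mul, mul_sub,
    Matrix.smul_mul, Matrix.mul_smul, one_mul, mul_one] at h
  linear_combination (norm := module) h

end RegularDigraph

theorem stmt13_general (v : ℕ) (k a b : ℝ) (A : Matrix (Fin v) (Fin v) ℝ)
    (hreg : A * allOnes v = k • allOnes v ∧ allOnes v * A = k • allOnes v)
    (hnormal : A * Aᵀ = Aᵀ * A)
    (hconn : ∀ x : Fin v → ℂ,
      (A.map (Complex.ofReal)).mulVec x = (k : ℂ) • x → ∀ i j, x i = x j)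
    (heig : ∀ θ : ℂ, (∃ x : Fin v → ℂ, x ≠ 0 ∧
        (A.map (Complex.ofReal)).mulVec x = θ • x) →
      θ = (k : ℂ) ∨ ‖θ - (a : ℂ)‖ = b) :
    A * Aᵀ = (b ^ 2 - a ^ 2 + ((k - a) ^ 2 - b ^ 2) / v) •
        (1 : Matrix (Fin v) (Fin v) ℝ) +
      (a + ((k - a) ^ 2 - b ^ 2) / v) • (A + Aᵀ) +
      (((k - a) ^ 2 - b ^ 2) / v) • (allOnes v - 1 - A - Aᵀ) := by
  set c := ((k - a) ^ 2 - b ^ 2) / v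
  have hAJ : Commute A (allOnes v) := hreg.1.trans hreg.2.symm
  have hJA : (allOnes v).map Complex.ofReal * A.map Complex.ofReal =
      (k : ℂ) • (allOnes v).map Complex.ofReal := by
    rw [← map_ofReal_mul, hreg.2]
    ext
    simp
  refine mul_transpose_eq_of_circleDefect_eq_zero <| map_injective Complex.ofReal_injective <|
    (circleDefect_map_ofReal_isHermitian A a b c).eq_zero_of_commute
      (commute_circleDefect hnormal hAJ a b c) fun θ z hz hAz => ?_
  rw [circleDefect_map_ofReal_mulVec hnormal a b c hAz]
  by_cases hθ : θ = k
  · subst hθ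
    obtain ⟨i, -⟩ := Function.ne_iff.mp hz
    have hcv : (c : ℂ) * v = (k - a) ^ 2 - b ^ 2 := by
      have : (v : ℂ) ≠ 0 := Nat.cast_ne_zero.mpr (Fin.pos i).ne'
      push_cast [c]
      field_simp
    rw [allOnes_map_ofReal_mulVec_of_forall_eq (hconn z hAz), ← Complex.ofReal_sub,
      Complex.norm_real, Real.norm_eq_abs, ← Complex.ofReal_pow, sq_abs]
    linear_combination (norm := module) -(hcv • z)
  · rw [mulVec_eq_zero_of_mul_eq_smul hJA hAz hθ, (heig θ ⟨z, hz, hAz⟩).resolve_left hθ]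
    simp

/-- A connected k-regular digraph with normal adjacency matrix all of whose
    eigenvalues other than k lie on the circle with centre a and radius b
    satisfies the normally-regular-digraph matrix equation with
    λ = a + c, μ = c, where c = ((k−a)² − b²)/v. -/
theorem stmt13 (v : ℕ) (k a b : ℝ) (A : Matrix (Fin v) (Fin v) ℝ)
    (h01 : ∀ i j, A i j = 0 ∨ A i j = 1) (hdiag : ∀ i, A i i = 0)
    (hreg : A * allOnes v = k • allOnes v ∧ allOnes v * A = k • allOnes v)
    (hnormal : A * Aᵀ = Aᵀ * A)
    (hconn : ∀ x : Fin v → ℂ,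
      (A.map (Complex.ofReal)).mulVec x = (k : ℂ) • x → ∀ i j, x i = x j)
    (heig : ∀ θ : ℂ, (∃ x : Fin v → ℂ, x ≠ 0 ∧
        (A.map (Complex.ofReal)).mulVec x = θ • x) →
      θ = (k : ℂ) ∨ ‖θ - (a : ℂ)‖ = b) :
    A * Aᵀ = (b ^ 2 - a ^ 2 + ((k - a) ^ 2 - b ^ 2) / v) •
        (1 : Matrix (Fin v) (Fin v) ℝ) +
      (a + ((k - a) ^ 2 - b ^ 2) / v) • (A + Aᵀ) +
      (((k - a) ^ 2 - b ^ 2) / v) • (allOnes v - 1 - A - Aᵀ) :=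
  stmt13_general v k a b A hreg hnormal hconn heig
end

section
/- If G is an asymmetric normally regular digraph with parameters (v,k,λ,μ) satisfying 2μ > k + λ, then the relation of non-adjacency is transitive on G, so G is group divisible (a complete multipartite tournament) and v − 2k divides v. -/
open Matrix

/-!
Write `i ∼ j` when neither `i → j` nor `j → i`. If `i ∼ j ∼ p` but `i → p`, then counting
out-neighbours, `|N(j) ∩ N(i)| + |N(j) ∩ N(p)| ≤ |N(j)| + |N(i) ∩ N(p)|`, i.e. `2μ ≤ k + λ`;
so `∼` is an equivalence relation. The class of `i` has `v - outdeg i - indeg i` elements, and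
every in-degree is `k`: with `c = μ - λ`, the matrix `B = A + cI` satisfies
`B Bᵀ = (k - μ + c²) I + μ J`, which is positive definite, so `B` is invertible, and
`B (Bᵀ 𝟙) = B Bᵀ 𝟙 ∈ ℝ𝟙 = ℝ B𝟙` forces `Bᵀ 𝟙 ∈ ℝ𝟙`. Hence every class has `v - 2k` elements.
-/

open Finset

section Matrices

variable {n : Type*} [Fintype n]

theorem mulVec_injective_of_mul_transpose_eq [DecidableEq n] {B : Matrix n n ℝ} {α β : ℝ}
    (hα : 0 < α) (hβ : 0 ≤ β) (hB : B * Bᵀ = α • 1 + β • of fun _ _ => 1) :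
    Function.Injective B.mulVec := by
  suffices Function.Injective Bᵀ.mulVec by
    rw [mulVec_injective_iff_isUnit, isUnit_transpose] at this
    exact mulVec_injective_iff_isUnit.mpr this
  refine (injective_iff_map_eq_zero Bᵀ.mulVecLin).mpr fun x hx => ?_
  have hquad : x ⬝ᵥ (B * Bᵀ) *ᵥ x = α * (x ⬝ᵥ x) + β * (∑ i, x i) ^ 2 := by
    rw [hB, add_mulVec, smul_mulVec, smul_mulVec, one_mulVec, dotProduct_add,
      dotProduct_smul, dotProduct_smul]
    simp only [smul_eq_mul, dotProduct, mulVec, of_apply, one_mul, sq, sum_mul]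
  have hzero : x ⬝ᵥ (B * Bᵀ) *ᵥ x = 0 := by
    rw [mulVecLin_apply] at hx
    rw [← mulVec_mulVec, dotProduct_mulVec, ← mulVec_transpose, hx, zero_dotProduct]
  have hsq : 0 ≤ x ⬝ᵥ x := sum_nonneg fun i _ => mul_self_nonneg (x i)
  refine dotProduct_self_eq_zero.mp (le_antisymm ?_ hsq)
  nlinarith [sq_nonneg (∑ i, x i)]

theorem transpose_mulVec_one_eq {K : Type*} [Field K] [CharZero K] [Nonempty n]
    {B : Matrix n n K} (hB : Function.Injective B.mulVec) {a b : K} (hrow : B *ᵥ 1 = a • 1)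
    (hgram : (B * Bᵀ) *ᵥ 1 = b • 1) : Bᵀ *ᵥ 1 = a • 1 := by
  have ha : a ≠ 0 := by
    rintro rfl
    rw [zero_smul, ← mulVec_zero B] at hrow
    exact one_ne_zero (hB hrow)
  have hconst : Bᵀ *ᵥ 1 = (b / a) • 1 := hB <| by
    rw [mulVec_mulVec, hgram, mulVec_smul, hrow, smul_smul, div_mul_cancel₀ b ha]
  have hsum : b / a * Fintype.card n = a * Fintype.card n := by
    have := dotProduct_mulVec (1 : n → K) Bᵀ 1
    rw [vecMul_transpose, hconst, hrow, dotProduct_smul, smul_dotProduct,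
      one_dotProduct_one] at this
    simpa using this
  rw [hconst, mul_right_cancel₀ (by simp) hsum]

end Matrices

theorem dvd_card_of_forall_card_eq {α : Type*} [Fintype α] {r : α → α → Prop}
    [DecidableRel r] (hr : Equivalence r) {n : ℤ} (hn : ∀ a, (#{b | r a b} : ℤ) = n) :
    n ∣ Fintype.card α := by
  classical
  let s : Setoid α := ⟨r, hr⟩
  have hfiber (q : Quotient s) : (#{a | Quotient.mk s a = q} : ℤ) = n := by
    induction q using Quotient.ind with | _ a => ?_
    rw [← hn a]
    congr 2
    ext b
    simp only [mem_filter, mem_univ, true_and, Quotient.eq]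
    exact ⟨hr.symm, hr.symm⟩
  rw [← card_univ, card_eq_sum_card_fiberwise (f := Quotient.mk s) (t := univ) (by simp)]
  push_cast
  rw [sum_congr rfl fun q _ => hfiber q, sum_const, card_univ, nsmul_eq_mul]
  exact dvd_mul_left n _

theorem mul_add_mul_le_of_zero_or_one {x y z : ℝ} (hx : x = 0 ∨ x = 1) (hy : y = 0 ∨ y = 1)
    (hz : z = 0 ∨ z = 1) : y * x + y * z ≤ y * y + x * z := by
  rcases hx with rfl | rfl <;> rcases hy with rfl | rfl <;> rcases hz with rfl | rfl <;> norm_num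

def NonAdj {n R : Type*} [Zero R] (A : Matrix n n R) (i j : n) : Prop :=
  A i j = 0 ∧ A j i = 0

instance {n R : Type*} [Zero R] [DecidableEq R] (A : Matrix n n R) : DecidableRel (NonAdj A) :=
  fun _ _ => instDecidableAnd

theorem nonAdj_or_adj {n : Type*} {A : Matrix n n ℝ} (h01 : ∀ i j, A i j = 0 ∨ A i j = 1)
    (hasym : ∀ i j, (A + Aᵀ) i j = 0 ∨ (A + Aᵀ) i j = 1) (i j : n) :
    NonAdj A i j ∨ A i j + A j i = 1 := by
  simp only [Matrix.add_apply, transpose_apply] at hasym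
  rcases h01 i j with hij | hij <;> rcases h01 j i with hji | hji <;>
    rcases hasym i j with h | h <;> simp_all [NonAdj]

namespace IsNRD

variable {v : ℕ} {k l m : ℤ} {A : Matrix (Fin v) (Fin v) ℝ}

theorem inner_rows (h : IsNRD v k l m A) (i j : Fin v) :
    ∑ t, A i t * A j t =
      k * (if i = j then 1 else 0) + l * (A i j + A j i) +
        m * (1 - (if i = j then 1 else 0) - A i j - A j i) := by
  have H := congrFun (congrFun h.2.2 i) j
  simpa only [mul_apply, transpose_apply, Matrix.add_apply, Matrix.sub_apply, Matrix.smul_apply,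
    one_apply, allOnes, of_apply, smul_eq_mul] using H

theorem inner_rows_self (h : IsNRD v k l m A) (i : Fin v) : ∑ t, A i t * A i t = k := by
  have := h.inner_rows i i
  simp only [if_true, h.2.1 i] at this
  linarith

theorem row_sum (h : IsNRD v k l m A) (i : Fin v) : ∑ t, A i t = k := by
  rw [← h.inner_rows_self i]
  refine sum_congr rfl fun t _ => ?_
  rcases h.1 i t with h0 | h0 <;> simp [h0]

theorem inner_rows_of_nonAdj (h : IsNRD v k l m A) {i j : Fin v} (hij : i ≠ j)
    (hn : NonAdj A i j) : ∑ t, A i t * A j t = m := by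
  have := h.inner_rows i j
  simp only [if_neg hij, hn.1, hn.2] at this
  linarith

theorem inner_rows_of_adj (h : IsNRD v k l m A) {i j : Fin v} (hij : i ≠ j)
    (hadj : A i j + A j i = 1) : ∑ t, A i t * A j t = l := by
  have := h.inner_rows i j
  rw [if_neg hij, show (1 : ℝ) - 0 - A i j - A j i = 0 by linarith, hadj] at this
  linarith

theorem nonAdj_trans (h : IsNRD v k l m A)
    (hasym : ∀ i j, (A + Aᵀ) i j = 0 ∨ (A + Aᵀ) i j = 1) (hm : 2 * m > k + l)
    {i j p : Fin v} (hij : NonAdj A i j) (hjp : NonAdj A j p) : NonAdj A i p := by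
  rcases eq_or_ne i j with rfl | hij'
  · exact hjp
  rcases eq_or_ne j p with rfl | hjp'
  · exact hij
  rcases eq_or_ne i p with rfl | hip'
  · exact ⟨h.2.1 i, h.2.1 i⟩
  refine (nonAdj_or_adj h.1 hasym i p).resolve_right fun hadj => ?_
  have hcount : ∑ t, (A j t * A i t + A j t * A p t) ≤ ∑ t, (A j t * A j t + A i t * A p t) :=
    sum_le_sum fun t _ => mul_add_mul_le_of_zero_or_one (h.1 i t) (h.1 j t) (h.1 p t)
  rw [sum_add_distrib, sum_add_distrib, h.inner_rows_of_nonAdj hij'.symm ⟨hij.2, hij.1⟩,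
    h.inner_rows_of_nonAdj hjp' hjp, h.inner_rows_self j, h.inner_rows_of_adj hip' hadj] at hcount
  have hm' : (k + l : ℝ) < 2 * m := by exact_mod_cast hm
  linarith

theorem nonAdj_equivalence (h : IsNRD v k l m A)
    (hasym : ∀ i j, (A + Aᵀ) i j = 0 ∨ (A + Aᵀ) i j = 1) (hm : 2 * m > k + l) :
    Equivalence (NonAdj A) where
  refl i := ⟨h.2.1 i, h.2.1 i⟩
  symm hij := ⟨hij.2, hij.1⟩
  trans := h.nonAdj_trans hasym hm

theorem entry_nonneg (h : IsNRD v k l m A) (i j : Fin v) : 0 ≤ A i j := by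
  rcases h.1 i j with h0 | h0 <;> simp [h0]

theorem shift_mul_transpose (h : IsNRD v k l m A) :
    (A + ((m : ℝ) - l) • 1) * (A + ((m : ℝ) - l) • 1)ᵀ =
      ((k : ℝ) - m + (m - l) ^ 2) • 1 + (m : ℝ) • allOnes v := by
  rw [transpose_add, transpose_smul, transpose_one, add_mul, mul_add, mul_add, h.2.2]
  simp only [Matrix.smul_mul, Matrix.mul_smul, Matrix.mul_one, Matrix.one_mul, smul_smul]
  module

theorem l_mem_Ico_of_edge (h : IsNRD v k l m A)
    (hasym : ∀ i j, (A + Aᵀ) i j = 0 ∨ (A + Aᵀ) i j = 1) {a b : Fin v} (hab : A a b = 1) :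
    l ∈ Set.Ico 0 k := by
  have hne : a ≠ b := by rintro rfl; simp [h.2.1 a] at hab
  have hadj : A a b + A b a = 1 :=
    (nonAdj_or_adj h.1 hasym a b).resolve_left fun hn => by simp [hn.1] at hab
  have hl : (0 : ℝ) ≤ l := by
    rw [← h.inner_rows_of_adj hne hadj]
    exact sum_nonneg fun t _ => mul_nonneg (h.entry_nonneg a t) (h.entry_nonneg b t)
  have hlk : (l : ℝ) < k := by
    rw [← h.inner_rows_of_adj hne hadj, ← h.row_sum a]
    refine sum_lt_sum (fun t _ => mul_le_of_le_one_right (h.entry_nonneg a t) ?_)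
      ⟨b, mem_univ b, by simp [h.2.1 b, hab]⟩
    rcases h.1 b t with h0 | h0 <;> simp [h0]
  exact ⟨by exact_mod_cast hl, by exact_mod_cast hlk⟩

theorem shift_mulVec_injective (h : IsNRD v k l m A)
    (hasym : ∀ i j, (A + Aᵀ) i j = 0 ∨ (A + Aᵀ) i j = 1) (hm : 2 * m > k + l) {a b : Fin v}
    (hab : A a b = 1) : Function.Injective (A + ((m : ℝ) - l) • 1).mulVec := by
  obtain ⟨hl, hlk⟩ := h.l_mem_Ico_of_edge hasym hab
  -- `k - μ + c² = (k - λ) + c (c - 1)` with `c = μ - λ` an integer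
  have hα : 0 < k - m + (m - l) ^ 2 := by nlinarith
  exact mulVec_injective_of_mul_transpose_eq (by exact_mod_cast hα)
    (by exact_mod_cast (show 0 ≤ m by omega)) h.shift_mul_transpose

theorem col_sum (h : IsNRD v k l m A)
    (hasym : ∀ i j, (A + Aᵀ) i j = 0 ∨ (A + Aᵀ) i j = 1) (hm : 2 * m > k + l) (i : Fin v) :
    ∑ t, A t i = k := by
  by_cases hedge : ∀ a b, A a b = 0
  · simpa [hedge] using h.row_sum i
  push Not at hedge
  obtain ⟨a, b, hab⟩ := hedge
  have hinj := h.shift_mulVec_injective hasym hm ((h.1 a b).resolve_left hab)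
  have : Nonempty (Fin v) := ⟨i⟩
  have hrow : (A + ((m : ℝ) - l) • 1) *ᵥ 1 = ((k : ℝ) + (m - l)) • 1 := by
    funext j
    simp [mulVec, dotProduct, one_apply, sum_add_distrib, h.row_sum]
  have hgram : ((A + ((m : ℝ) - l) • 1) * (A + ((m : ℝ) - l) • 1)ᵀ) *ᵥ 1 =
      ((k : ℝ) - m + (m - l) ^ 2 + m * v) • 1 := by
    rw [h.shift_mul_transpose, add_mulVec, smul_mulVec, smul_mulVec, one_mulVec]
    funext j
    simp [allOnes, mulVec, dotProduct]
  have := congrFun (transpose_mulVec_one_eq hinj hrow hgram) i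
  simp only [mulVec, dotProduct, transpose_apply, Matrix.add_apply, Matrix.smul_apply, one_apply,
    Pi.one_apply, Pi.smul_apply, mul_one, smul_eq_mul, sum_add_distrib] at this
  simpa using this

theorem card_nonAdj (h : IsNRD v k l m A)
    (hasym : ∀ i j, (A + Aᵀ) i j = 0 ∨ (A + Aᵀ) i j = 1) (hm : 2 * m > k + l) (i : Fin v) :
    (#{j | NonAdj A i j} : ℤ) = v - 2 * k := by
  have hcard : (#{j | NonAdj A i j} : ℝ) = ∑ j, (1 - A i j - A j i) := by
    rw [card_filter]
    push_cast
    refine sum_congr rfl fun j _ => ?_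
    rcases nonAdj_or_adj h.1 hasym i j with hn | hadj
    · rw [if_pos hn, hn.1, hn.2]
      norm_num
    · rw [if_neg fun hn => by rw [hn.1, hn.2] at hadj; norm_num at hadj]
      linarith
  rw [sum_sub_distrib, sum_sub_distrib, h.row_sum, h.col_sum hasym hm] at hcard
  simp only [sum_const, card_univ, Fintype.card_fin, nsmul_eq_mul, mul_one] at hcard
  have hcast : ((#{j | NonAdj A i j} : ℤ) : ℝ) = ((v - 2 * k : ℤ) : ℝ) := by
    push_cast
    linarith
  exact_mod_cast hcast

end IsNRD

/-- In an asymmetric normally regular digraph with 2μ > k + λ, non-adjacency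
    is a transitive relation, so the graph is group divisible and v − 2k
    divides v. -/
theorem stmt16 (v : ℕ) (k l m : ℤ) (A : Matrix (Fin v) (Fin v) ℝ)
    (h : IsNRD v k l m A)
    (hasym : ∀ i j, (A + Aᵀ) i j = 0 ∨ (A + Aᵀ) i j = 1)
    (hm : 2 * m > k + l) :
    (∀ i j p : Fin v, i ≠ j → j ≠ p → i ≠ p →
      (A i j = 0 ∧ A j i = 0) → (A j p = 0 ∧ A p j = 0) →
      (A i p = 0 ∧ A p i = 0)) ∧
    ((v : ℤ) - 2 * k) ∣ (v : ℤ) := by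
  refine ⟨fun _ _ _ _ _ _ => h.nonAdj_trans hasym hm, ?_⟩
  simpa using dvd_card_of_forall_card_eq (h.nonAdj_equivalence hasym hm) (h.card_nonAdj hasym hm)
end

section
/- Let q ≡ 5 (mod 8) be a prime power and D = {x⁴ : x ∈ GF(q), x ≠ 0} the set of nonzero fourth powers. Then the Cayley digraph of the additive group of GF(q) with connection set D is an asymmetric normally regular digraph with parameters (q, k, λ, μ) where q = 4k+1 and q = 8(μ+λ)+5. -/
/-!
Write `D` for the fourth powers and `N g` for the number of pairs `(x, y) ∈ D × D` with
`y - x = g`. Since `q ≡ 5 (mod 8)`, `D` has index `4` in `Fˣ`, `-1` is a square but not a fourth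
power (as `(q - 1) / 4` is odd), and hence `D ∪ -D` is exactly the set of nonzero squares.
`N` is invariant under `g ↦ -g` (swap the pair) and under `g ↦ c g` for `c ∈ D` (scale the pair),
so `N` is constant, say `λ`, on the nonzero squares and constant, say `μ`, on the non-squares.
Counting all pairs gives `k² = k + 2kλ + 2kμ`, i.e. `k = 2(λ + μ) + 1`.
-/

def fourthPowers (F : Type*) [Field F] [Fintype F] [DecidableEq F] : Finset F :=
  (Finset.univ.filter (fun x : F => x ≠ 0)).image (fun x => x ^ 4)

open Finset
open scoped Pointwise

section DiffCount

variable {G : Type*} [AddCommGroup G] [DecidableEq G]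

def diffCount (S : Finset G) (g : G) : ℕ := #{p ∈ S ×ˢ S | p.2 - p.1 = g}

lemma diffCount_neg (S : Finset G) (g : G) : diffCount S (-g) = diffCount S g := by
  refine card_nbij' Prod.swap Prod.swap ?_ ?_ (fun _ _ => rfl) (fun _ _ => rfl) <;>
  · rintro ⟨x, y⟩ h
    simp only [coe_filter, mem_product, Set.mem_ofPred_eq, Prod.swap_prod_mk] at h ⊢
    exact ⟨h.1.symm, by grind⟩

lemma diffCount_zero (S : Finset G) : diffCount S 0 = #S := by
  rw [diffCount, ← S.diag_card, diag_eq_filter]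
  simp only [sub_eq_zero, eq_comm]

lemma sum_diffCount [Fintype G] (S : Finset G) : ∑ g, diffCount S g = #S * #S := by
  rw [← card_product]
  exact (card_eq_sum_card_fiberwise fun p _ => mem_univ (p.2 - p.1)).symm

lemma card_mul_card_eq_of_diffCount_eq_ite [Fintype G] (S T : Finset G) (hT : 0 ∉ T) {l m : ℕ}
    (hS : ∀ g ≠ 0, diffCount S g = if g ∈ T then l else m) :
    #S * #S = #S + #T * l + (Fintype.card G - 1 - #T) * m := by
  have hT' : T ⊆ univ.erase 0 := fun g hg => mem_erase.2 ⟨ne_of_mem_of_not_mem hg hT, mem_univ g⟩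
  have hcompl : #{g ∈ univ.erase 0 | g ∉ T} = Fintype.card G - 1 - #T := by
    have := card_filter_add_card_filter_not (s := univ.erase 0) (· ∈ T)
    rw [filter_mem_eq_inter, inter_eq_right.2 hT', card_erase_of_mem (mem_univ _),
      card_univ] at this
    omega
  rw [← sum_diffCount, ← add_sum_erase _ _ (mem_univ 0), diffCount_zero,
    sum_congr rfl fun g hg => hS g (ne_of_mem_erase hg), sum_ite, sum_const, sum_const,
    filter_mem_eq_inter, inter_eq_right.2 hT', hcompl, smul_eq_mul, smul_eq_mul, add_assoc]

end DiffCount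

lemma diffCount_mul {F : Type*} [Field F] [DecidableEq F] {S : Finset F} {c : F} (hc : c ≠ 0)
    (hS : ∀ x, c * x ∈ S ↔ x ∈ S) (g : F) : diffCount S (c * g) = diffCount S g := by
  refine card_nbij' (fun p => (c⁻¹ * p.1, c⁻¹ * p.2)) (fun p => (c * p.1, c * p.2))
    ?_ ?_ ?_ ?_
  · rintro ⟨x, y⟩ h
    simp only [coe_filter, mem_product, Set.mem_ofPred_eq] at h ⊢
    refine ⟨⟨(hS _).1 ?_, (hS _).1 ?_⟩, ?_⟩
    · rw [mul_inv_cancel_left₀ hc]; exact h.1.1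
    · rw [mul_inv_cancel_left₀ hc]; exact h.1.2
    rw [← mul_sub, h.2, inv_mul_cancel_left₀ hc]
  · rintro ⟨x, y⟩ h
    simp only [coe_filter, mem_product, Set.mem_ofPred_eq] at h ⊢
    exact ⟨⟨(hS _).2 h.1.1, (hS _).2 h.1.2⟩, by rw [← mul_sub, h.2]⟩
  · rintro ⟨x, y⟩ _
    simp only [mul_inv_cancel_left₀ hc]
  · rintro ⟨x, y⟩ _
    simp only [inv_mul_cancel_left₀ hc]

section FiniteField

variable {F : Type*} [Field F] [Fintype F]

lemma ringChar_ne_two_of_card_mod_two (h : Fintype.card F % 2 = 1) : ringChar F ≠ 2 :=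
  fun h2 => by have := FiniteField.even_card_iff_char_two.1 h2; omega

lemma isSquare_div_of_not_isSquare {a b : F} (ha : ¬IsSquare a) (hb : ¬IsSquare b) :
    IsSquare (a / b) := by
  classical
  have hb0 : b ≠ 0 := by rintro rfl; exact hb ⟨0, (mul_zero 0).symm⟩
  have hab : IsSquare (a * b) := by
    have ha0 : a ≠ 0 := by rintro rfl; exact ha ⟨0, (mul_zero 0).symm⟩
    rw [← quadraticChar_one_iff_isSquare (mul_ne_zero ha0 hb0), map_mul,
      quadraticChar_neg_one_iff_not_isSquare.2 ha, quadraticChar_neg_one_iff_not_isSquare.2 hb]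
    rfl
  rw [show a / b = a * b * (b⁻¹ * b⁻¹) by field_simp]
  exact hab.mul ⟨b⁻¹, rfl⟩

end FiniteField

section FourthPowers

variable {F : Type*} [Field F] [Fintype F] [DecidableEq F]

@[simp]
lemma mem_fourthPowers {y : F} : y ∈ fourthPowers F ↔ ∃ x ≠ 0, x ^ 4 = y := by
  simp [fourthPowers]

lemma ne_zero_of_mem_fourthPowers {y : F} (hy : y ∈ fourthPowers F) : y ≠ 0 := by
  obtain ⟨x, hx, rfl⟩ := mem_fourthPowers.1 hy
  exact pow_ne_zero 4 hx

lemma mul_mem_fourthPowers {a b : F} (ha : a ∈ fourthPowers F) (hb : b ∈ fourthPowers F) :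
    a * b ∈ fourthPowers F := by
  obtain ⟨x, hx, rfl⟩ := mem_fourthPowers.1 ha
  obtain ⟨y, hy, rfl⟩ := mem_fourthPowers.1 hb
  exact mem_fourthPowers.2 ⟨x * y, mul_ne_zero hx hy, mul_pow x y 4⟩

lemma inv_mem_fourthPowers {a : F} (ha : a ∈ fourthPowers F) : a⁻¹ ∈ fourthPowers F := by
  obtain ⟨x, hx, rfl⟩ := mem_fourthPowers.1 ha
  exact mem_fourthPowers.2 ⟨x⁻¹, inv_ne_zero hx, inv_pow x 4⟩

lemma mul_mem_fourthPowers_iff {c x : F} (hc : c ∈ fourthPowers F) :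
    c * x ∈ fourthPowers F ↔ x ∈ fourthPowers F := by
  refine ⟨fun h => ?_, mul_mem_fourthPowers hc⟩
  rw [← inv_mul_cancel_left₀ (ne_zero_of_mem_fourthPowers hc) x]
  exact mul_mem_fourthPowers (inv_mem_fourthPowers hc) h

lemma card_fourthPowers_eq_card_range :
    #(fourthPowers F) = Nat.card (powMonoidHom 4 : Fˣ →* Fˣ).range := by
  have : fourthPowers F =
      (Set.range fun u : Fˣ => u ^ 4).toFinset.map ⟨Units.val, Units.val_injective⟩ := by
    ext y
    simp only [mem_fourthPowers, mem_map, Set.mem_toFinset, Set.mem_range,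
      Function.Embedding.coeFn_mk, exists_exists_eq_and, Units.val_pow_eq_pow_val]
    exact ⟨fun ⟨x, hx, hxy⟩ => ⟨Units.mk0 x hx, hxy⟩, fun ⟨u, hu⟩ => ⟨u, u.ne_zero, hu⟩⟩
  rw [this, card_map, Set.toFinset_card, ← Nat.card_eq_fintype_card]
  rfl

lemma four_mul_card_fourthPowers (h : 4 ∣ Fintype.card F - 1) :
    4 * #(fourthPowers F) = Fintype.card F - 1 := by
  have := IsCyclic.card_powMonoidHom_range (G := Fˣ) 4
  rw [Nat.card_eq_fintype_card (α := Fˣ), Fintype.card_units, Nat.gcd_eq_right h,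
    ← card_fourthPowers_eq_card_range] at this
  rw [this, Nat.mul_div_cancel' h]

lemma neg_one_notMem_fourthPowers (h : Fintype.card F % 8 = 5) : (-1 : F) ∉ fourthPowers F := by
  rw [mem_fourthPowers]
  rintro ⟨x, hx, hx4⟩
  obtain ⟨k, hk, hodd⟩ : ∃ k, Fintype.card F - 1 = 4 * k ∧ Odd k :=
    ⟨(Fintype.card F - 1) / 4, by omega, by rw [Nat.odd_iff]; omega⟩
  apply Ring.neg_one_ne_one_of_char_ne_two
    (ringChar_ne_two_of_card_mod_two (by omega) : ringChar F ≠ 2)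
  calc (-1 : F) = (x ^ 4) ^ k := by rw [hx4, hodd.neg_one_pow]
    _ = x ^ (Fintype.card F - 1) := by rw [← pow_mul, hk]
    _ = 1 := FiniteField.pow_card_sub_one_eq_one x hx

lemma neg_notMem_fourthPowers (h : Fintype.card F % 8 = 5) {x : F} (hx : x ∈ fourthPowers F) :
    -x ∉ fourthPowers F := fun hnx => by
  apply neg_one_notMem_fourthPowers h
  rwa [← mul_mem_fourthPowers_iff hx, mul_neg_one]

lemma isSquare_iff_mem_fourthPowers_or_neg_mem (h : Fintype.card F % 8 = 5) {g : F} (hg : g ≠ 0) :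
    IsSquare g ↔ g ∈ fourthPowers F ∨ -g ∈ fourthPowers F := by
  obtain ⟨i, hi⟩ : IsSquare (-1 : F) := FiniteField.isSquare_neg_one_iff.2 (by omega)
  have hi0 : i ≠ 0 := by rintro rfl; exact one_ne_zero (neg_eq_zero.1 (by rw [hi, mul_zero]))
  constructor
  · rintro ⟨y, rfl⟩
    have hy : y ≠ 0 := by rintro rfl; exact hg (mul_zero 0)
    have hi' : ¬IsSquare i := by
      rintro ⟨z, rfl⟩
      refine neg_one_notMem_fourthPowers h (mem_fourthPowers.2 ⟨z, ?_, by rw [hi]; ring⟩)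
      rintro rfl
      exact hi0 (mul_zero 0)
    -- `i = √-1` is not a square, so one of `y`, `y / i` is
    by_cases hys : IsSquare y
    · obtain ⟨z, rfl⟩ := hys
      exact .inl (mem_fourthPowers.2 ⟨z, by rintro rfl; exact hy (mul_zero 0), by ring⟩)
    · obtain ⟨z, hz⟩ := isSquare_div_of_not_isSquare hys hi'
      refine .inr (mem_fourthPowers.2 ⟨z, ?_, ?_⟩)
      · rintro rfl
        exact hy ((div_eq_zero_iff.1 (hz.trans (mul_zero 0))).resolve_right hi0)
      · calc z ^ 4 = (y / i) ^ 2 := by rw [hz]; ring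
          _ = -(y * y) := by field_simp; linear_combination -hi
  · rintro (hg4 | hg4)
    · obtain ⟨x, -, rfl⟩ := mem_fourthPowers.1 hg4
      exact ⟨x ^ 2, by ring⟩
    · obtain ⟨x, -, hx⟩ := mem_fourthPowers.1 hg4
      exact ⟨i * x ^ 2, by linear_combination x ^ 4 * hi + hx⟩

lemma diffCount_fourthPowers_mul_of_isSquare (h : Fintype.card F % 8 = 5) {c : F} (hc0 : c ≠ 0)
    (hc : IsSquare c) (g : F) :
    diffCount (fourthPowers F) (c * g) = diffCount (fourthPowers F) g := by
  rcases (isSquare_iff_mem_fourthPowers_or_neg_mem h hc0).1 hc with hc4 | hc4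
  · exact diffCount_mul hc0 (fun _ => mul_mem_fourthPowers_iff hc4) g
  · rw [← neg_mul_neg, diffCount_mul (neg_ne_zero.2 hc0) (fun _ => mul_mem_fourthPowers_iff hc4),
      diffCount_neg]

lemma card_fourthPowers_union_neg (h : Fintype.card F % 8 = 5) :
    #(fourthPowers F ∪ -fourthPowers F) = 2 * #(fourthPowers F) := by
  rw [card_union_of_disjoint, card_neg, two_mul]
  exact disjoint_left.2 fun x hx hnx => neg_notMem_fourthPowers h hx (mem_neg'.1 hnx)

lemma diffCount_fourthPowers_eq_ite (h : Fintype.card F % 8 = 5) {u : F} (hu : ¬IsSquare u)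
    {g : F} (hg : g ≠ 0) :
    diffCount (fourthPowers F) g = if g ∈ fourthPowers F ∪ -fourthPowers F
      then diffCount (fourthPowers F) 1 else diffCount (fourthPowers F) u := by
  have hu0 : u ≠ 0 := by rintro rfl; exact hu ⟨0, (mul_zero 0).symm⟩
  rw [if_congr (by rw [mem_union, mem_neg', ← isSquare_iff_mem_fourthPowers_or_neg_mem h hg])
    rfl rfl]
  split_ifs with hgs
  · simpa using diffCount_fourthPowers_mul_of_isSquare h hg hgs 1
  · rw [← div_mul_cancel₀ g hu0]
    exact diffCount_fourthPowers_mul_of_isSquare h (div_ne_zero hg hu0)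
      (isSquare_div_of_not_isSquare hgs hu) u

end FourthPowers

theorem stmt18_general (q : ℕ) (h5 : q % 8 = 5)
    (F : Type*) [Field F] [Fintype F] [DecidableEq F]
    (hcard : Fintype.card F = q) :
    ∃ k l m : ℕ, q = 4 * k + 1 ∧ q = 8 * (m + l) + 5 ∧
      (fourthPowers F).card = k ∧
      (∀ x ∈ fourthPowers F, -x ∉ fourthPowers F) ∧
      ∀ g : F, g ≠ 0 →
        (((fourthPowers F) ×ˢ (fourthPowers F)).filter
            (fun p => p.2 - p.1 = g)).card =
          if g ∈ fourthPowers F ∨ -g ∈ fourthPowers F then l else m := by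
  subst hcard
  obtain ⟨u, hu⟩ :=
    FiniteField.exists_nonsquare (ringChar_ne_two_of_card_mod_two (F := F) (by omega))
  have hN (g : F) (hg : g ≠ 0) := diffCount_fourthPowers_eq_ite h5 hu hg
  have hcount := card_mul_card_eq_of_diffCount_eq_ite _ _ (by simp [mem_neg']) hN
  have hk := four_mul_card_fourthPowers (F := F) (by omega)
  rw [card_fourthPowers_union_neg h5] at hcount
  set D := fourthPowers F
  rw [show Fintype.card F - 1 - 2 * #D = 2 * #D by omega] at hcount
  have hrel : #D = 1 + 2 * (diffCount D 1 + diffCount D u) :=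
    Nat.eq_of_mul_eq_mul_left (show 0 < #D by omega) (by rw [hcount]; ring)
  refine ⟨#D, diffCount D 1, diffCount D u, by omega, by omega, rfl,
    fun x hx => neg_notMem_fourthPowers h5 hx,
    fun g hg => (hN g hg).trans (if_congr (by rw [mem_union, mem_neg']) rfl rfl)⟩

/-- For a prime power q ≡ 5 (mod 8), the Cayley digraph of the additive group
    of GF(q) on the nonzero fourth powers D is an asymmetric normally regular
    digraph with parameters (q, k, λ, μ), q = 4k+1 = 8(μ+λ)+5. -/
theorem stmt18 (q : ℕ) (hq : IsPrimePow q) (h5 : q % 8 = 5)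
    (F : Type*) [Field F] [Fintype F] [DecidableEq F]
    (hcard : Fintype.card F = q) :
    ∃ k l m : ℕ, q = 4 * k + 1 ∧ q = 8 * (m + l) + 5 ∧
      (fourthPowers F).card = k ∧
      (∀ x ∈ fourthPowers F, -x ∉ fourthPowers F) ∧
      ∀ g : F, g ≠ 0 →
        (((fourthPowers F) ×ˢ (fourthPowers F)).filter
            (fun p => p.2 - p.1 = g)).card =
          if g ∈ fourthPowers F ∨ -g ∈ fourthPowers F then l else m :=
  stmt18_general q h5 F hcard
end

section
/- Let T be a doubly regular tournament on 4t+3 vertices (a tournament that is an NRD with k = 2t+1, λ = t). Then the cartesian product digraph on V(T) × {1,…,2t+1} with edges (x,u) → (y,u) whenever x → y in T, and undirected edges (x,u) ↔ (x,v) for u ≠ v, is a normally regular digraph with parameters ((4t+3)(2t+1), 4t+1, t, 1). -/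
open Finset

private lemma stmt19_inj1 {n m : ℕ} (u : Fin m) :
    Function.Injective (fun y : Fin n => (y, u)) :=
  fun _ _ h => congrArg Prod.fst h

private lemma stmt19_inj2 {n m : ℕ} (x : Fin n) :
    Function.Injective (fun v : Fin m => (x, v)) :=
  fun _ _ h => congrArg Prod.snd h

/-- out-degree count -/
private lemma stmt19_deg {n m : ℕ} (R : Fin n → Fin n → Prop) [DecidableRel R]
    (a : Fin n × Fin m) (p : Fin n × Fin m → Prop) [DecidablePred p]
    (hp : ∀ b, p b ↔ ((a.2 = b.2 ∧ R a.1 b.1) ∨ (a.1 = b.1 ∧ a.2 ≠ b.2))) :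
    (univ.filter p).card = (univ.filter (fun y => R a.1 y)).card + (m - 1) := by
  have hset : univ.filter p =
      ((univ.filter (fun y => R a.1 y)).image (fun y => (y, a.2))) ∪
        ((univ.erase a.2).image (fun v => (a.1, v))) := by
    ext ⟨x, v⟩
    simp only [mem_filter, mem_univ, true_and, mem_union, mem_image, mem_erase, hp]
    constructor
    · rintro (⟨h1, h2⟩ | ⟨h1, h2⟩)
      · exact Or.inl ⟨x, h2, by rw [h1]⟩
      · exact Or.inr ⟨v, ⟨fun h => h2 h.symm, trivial⟩, by rw [h1]⟩
    · rintro (⟨y, hy, h⟩ | ⟨w, ⟨hw, _⟩, h⟩)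
      · obtain ⟨h1, h2⟩ := Prod.mk.injEq .. ▸ h
        exact Or.inl ⟨h2, h1 ▸ hy⟩
      · obtain ⟨h1, h2⟩ := Prod.mk.injEq .. ▸ h
        exact Or.inr ⟨h1, fun hh => hw (h2.trans hh.symm)⟩
  rw [hset, card_union_of_disjoint, card_image_of_injective _ (stmt19_inj1 a.2),
    card_image_of_injective _ (stmt19_inj2 a.1), card_erase_of_mem (mem_univ _),
    card_univ, Fintype.card_fin]
  · rw [disjoint_left]
    rintro ⟨x, v⟩ h1 h2
    simp only [mem_image, mem_filter, mem_univ, true_and, mem_erase] at h1 h2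
    obtain ⟨y, _, hy⟩ := h1
    obtain ⟨w, ⟨hw, _⟩, hw'⟩ := h2
    obtain ⟨_, e1⟩ := Prod.mk.injEq .. ▸ hy
    obtain ⟨_, e2⟩ := Prod.mk.injEq .. ▸ hw'
    exact hw (e2.trans e1.symm)

/-- μ = 1 count for non-adjacent pairs -/
private lemma stmt19_mu {n m : ℕ} (R : Fin n → Fin n → Prop) [DecidableRel R]
    (a b : Fin n × Fin m) (h1 : a.1 ≠ b.1) (h2 : a.2 ≠ b.2)
    (hR : R a.1 b.1) (hnR : ¬ R b.1 a.1)
    (p : Fin n × Fin m → Prop) [DecidablePred p]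
    (hp : ∀ c, p c ↔
      (((a.2 = c.2 ∧ R a.1 c.1) ∨ (a.1 = c.1 ∧ a.2 ≠ c.2)) ∧
       ((b.2 = c.2 ∧ R b.1 c.1) ∨ (b.1 = c.1 ∧ b.2 ≠ c.2)))) :
    (univ.filter p).card = 1 := by
  rw [card_eq_one]
  refine ⟨(b.1, a.2), ?_⟩
  ext ⟨x, v⟩
  simp only [mem_filter, mem_univ, true_and, mem_singleton, Prod.mk.injEq, hp]
  constructor
  · rintro ⟨ha | ha, hb | hb⟩
    · exact absurd (ha.1.trans hb.1.symm) h2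
    · exact ⟨hb.1.symm, ha.1.symm⟩
    · exact absurd (ha.1 ▸ hb.2) hnR
    · exact absurd (ha.1.trans hb.1.symm) h1
  · rintro ⟨rfl, rfl⟩
    exact ⟨Or.inl ⟨rfl, hR⟩, Or.inr ⟨rfl, Ne.symm h2⟩⟩

/-- λ = t count for singly-adjacent pairs -/
private lemma stmt19_la {n m : ℕ} (R : Fin n → Fin n → Prop) [DecidableRel R]
    (a b : Fin n × Fin m) (h1 : a.1 ≠ b.1) (h2 : a.2 = b.2)
    (p : Fin n × Fin m → Prop) [DecidablePred p]
    (hp : ∀ c, p c ↔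
      (((a.2 = c.2 ∧ R a.1 c.1) ∨ (a.1 = c.1 ∧ a.2 ≠ c.2)) ∧
       ((b.2 = c.2 ∧ R b.1 c.1) ∨ (b.1 = c.1 ∧ b.2 ≠ c.2)))) :
    (univ.filter p).card = (univ.filter (fun z => R a.1 z ∧ R b.1 z)).card := by
  have hset : univ.filter p =
      (univ.filter (fun z => R a.1 z ∧ R b.1 z)).image (fun y => (y, a.2)) := by
    ext ⟨x, v⟩
    simp only [mem_filter, mem_univ, true_and, mem_image, hp]
    constructor
    · rintro ⟨ha | ha, hb | hb⟩
      · exact ⟨x, ⟨ha.2, hb.2⟩, by rw [ha.1]⟩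
      · exact absurd (h2.symm.trans ha.1) hb.2
      · exact absurd (h2.trans hb.1) ha.2
      · exact absurd (ha.1.trans hb.1.symm) h1
    · rintro ⟨y, ⟨r1, r2⟩, h⟩
      obtain ⟨e1, e2⟩ := Prod.mk.injEq .. ▸ h
      exact ⟨Or.inl ⟨e2, e1 ▸ r1⟩, Or.inl ⟨h2 ▸ e2, e1 ▸ r2⟩⟩
  rw [hset, card_image_of_injective _ (stmt19_inj1 a.2)]

/-- 2λ−μ = 2t−1 count for doubly-adjacent pairs -/
private lemma stmt19_tl {n m : ℕ} (R : Fin n → Fin n → Prop) [DecidableRel R]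
    (hirr : ∀ x, ¬ R x x)
    (a b : Fin n × Fin m) (h1 : a.1 = b.1) (h2 : a.2 ≠ b.2)
    (p : Fin n × Fin m → Prop) [DecidablePred p]
    (hp : ∀ c, p c ↔
      (((a.2 = c.2 ∧ R a.1 c.1) ∨ (a.1 = c.1 ∧ a.2 ≠ c.2)) ∧
       ((b.2 = c.2 ∧ R b.1 c.1) ∨ (b.1 = c.1 ∧ b.2 ≠ c.2)))) :
    (univ.filter p).card = m - 2 := by
  have hset : univ.filter p =
      (univ.filter (fun v => v ≠ a.2 ∧ v ≠ b.2)).image (fun v => (a.1, v)) := by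
    ext ⟨x, v⟩
    simp only [mem_filter, mem_univ, true_and, mem_image, hp]
    constructor
    · rintro ⟨ha | ha, hb | hb⟩
      · exact absurd (ha.1.trans hb.1.symm) h2
      · have e : a.1 = x := h1.trans hb.1
        exact absurd (e ▸ ha.2) (hirr x)
      · have e : b.1 = x := h1.symm.trans ha.1
        exact absurd (e ▸ hb.2) (hirr x)
      · exact ⟨v, ⟨fun h => ha.2 h.symm, fun h => hb.2 h.symm⟩, by rw [ha.1]⟩
    · rintro ⟨w, ⟨hw1, hw2⟩, h⟩
      obtain ⟨e1, e2⟩ := Prod.mk.injEq .. ▸ h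
      exact ⟨Or.inr ⟨e1, fun h => hw1 (e2 ▸ h.symm)⟩,
        Or.inr ⟨h1 ▸ e1, fun h => hw2 (e2 ▸ h.symm)⟩⟩
  rw [hset, card_image_of_injective _ (stmt19_inj2 a.1)]
  have h : univ.filter (fun v : Fin m => v ≠ a.2 ∧ v ≠ b.2) = univ \ {a.2, b.2} := by
    ext v
    simp [not_or]
  rw [h, card_sdiff_of_subset (by intro v _; exact mem_univ v), card_univ, Fintype.card_fin,
    card_pair h2]

/-- The cartesian product of a doubly regular tournament on 4t+3 vertices
    with the complete graph K_{2t+1} is a normally regular digraph with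
    parameters ((4t+3)(2t+1), 4t+1, t, 1). -/
theorem stmt19 (t : ℕ) (R : Fin (4 * t + 3) → Fin (4 * t + 3) → Prop)
    [DecidableRel R]
    (hirr : ∀ x, ¬ R x x)
    (htour : ∀ x y, x ≠ y → (R x y ↔ ¬ R y x))
    (hreg : ∀ x, (univ.filter (fun y => R x y)).card = 2 * t + 1)
    (hdr : ∀ x y, x ≠ y →
      (univ.filter (fun z => R x z ∧ R y z)).card = t) :
    let E : Fin (4 * t + 3) × Fin (2 * t + 1) →
        Fin (4 * t + 3) × Fin (2 * t + 1) → Prop :=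
      fun a b => (a.2 = b.2 ∧ R a.1 b.1) ∨ (a.1 = b.1 ∧ a.2 ≠ b.2)
    -- the product digraph is an NRD((4t+3)(2t+1), 4t+1, t, 1):
    (∀ a, (univ.filter (fun b => E a b)).card = 4 * t + 1) ∧
    (∀ a b, a ≠ b → ¬ E a b → ¬ E b a →
      (univ.filter (fun c => E a c ∧ E b c)).card = 1) ∧
    (∀ a b, (E a b ∧ ¬ E b a) ∨ (E b a ∧ ¬ E a b) →
      (univ.filter (fun c => E a c ∧ E b c)).card = t) ∧
    (∀ a b, a ≠ b → E a b → E b a →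
      ((univ.filter (fun c => E a c ∧ E b c)).card : ℤ) = 2 * t - 1) := by
  intro E
  refine ⟨?_, ?_, ?_, ?_⟩
  · -- out-degree
    intro a
    rw [stmt19_deg R a _ (fun b => Iff.rfl), hreg a.1]
    omega
  · -- μ = 1
    intro a b hab hnab hnba
    have hf : a.1 ≠ b.1 := by
      intro h
      have hs : a.2 ≠ b.2 := fun h2 => hab (Prod.ext h h2)
      exact hnab (Or.inr ⟨h, hs⟩)
    have hs : a.2 ≠ b.2 := by
      intro h
      by_cases hR : R a.1 b.1
      · exact hnab (Or.inl ⟨h, hR⟩)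
      · exact hnba (Or.inl ⟨h.symm, (htour b.1 a.1 hf.symm).mpr hR⟩)
    by_cases hR : R a.1 b.1
    · exact stmt19_mu R a b hf hs hR ((htour a.1 b.1 hf).mp hR) _ (fun c => Iff.rfl)
    · have hR' : R b.1 a.1 := (htour b.1 a.1 hf.symm).mpr hR
      exact stmt19_mu R b a hf.symm hs.symm hR' hR _
        (fun c => ⟨fun h => ⟨h.2, h.1⟩, fun h => ⟨h.2, h.1⟩⟩)
  · -- λ = t
    intro a b h
    rcases h with ⟨hab, hnba⟩ | ⟨hba, hnab⟩
    · rcases hab with ⟨h2, hR⟩ | ⟨hf, hs⟩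
      · have hf : a.1 ≠ b.1 := fun h => hirr b.1 (by rwa [h] at hR)
        rw [stmt19_la R a b hf h2 _ (fun c => Iff.rfl)]
        exact hdr a.1 b.1 hf
      · exact absurd (Or.inr ⟨hf.symm, Ne.symm hs⟩) hnba
    · rcases hba with ⟨h2, hR⟩ | ⟨hf, hs⟩
      · have hf : b.1 ≠ a.1 := fun h => hirr a.1 (by rwa [h] at hR)
        rw [stmt19_la R b a hf h2 _
          (fun c => ⟨fun h => ⟨h.2, h.1⟩, fun h => ⟨h.2, h.1⟩⟩)]
        exact hdr b.1 a.1 hf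
      · exact absurd (Or.inr ⟨hf.symm, Ne.symm hs⟩) hnab
  · -- 2λ − μ = 2t − 1
    intro a b hab h1 h2
    have key : a.1 = b.1 ∧ a.2 ≠ b.2 := by
      rcases h1 with ⟨h2', hR⟩ | ⟨hf, hs⟩
      · rcases h2 with ⟨_, hR'⟩ | ⟨hf, hs⟩
        · have hf : a.1 ≠ b.1 := fun h => hirr b.1 (by rwa [h] at hR)
          exact absurd hR' ((htour a.1 b.1 hf).mp hR)
        · exact absurd (by rwa [hf] at hR : R a.1 a.1) (hirr a.1)
      · exact ⟨hf, hs⟩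
    obtain ⟨hf, hs⟩ := key
    rw [stmt19_tl R hirr a b hf hs _ (fun c => Iff.rfl)]
    have ht : 1 ≤ t := by
      have hv : a.2.val ≠ b.2.val := fun h => hs (Fin.ext h)
      have := a.2.isLt
      have := b.2.isLt
      omega
    omega
end
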